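/- arXiv:1811.07661 — 6 statements merged into one kernel-verified Lean document; each statement's English description precedes it below -/
import Mathlib

section
/- Consider a network of m RFMIOs with feedback inputs u^i = c^i_0 + Σ_{k=1}^m c^i_k y^k, where c^i_0 > 0 and c^i_k ≥ 0. Then there exists a point e ∈ (0,1)^ℓ with F(e) = 0 such that e is globally asymptotically stable on the cube: every differentiable function z : [0,∞) → ℝ^ℓ satisfying ż(t) = F(z(t)) for all t ≥ 0 and z(0) ∈ [0,1]^ℓ satisfies lim_{t→∞} z(t) = e. -/
open scoped BigOperators

/-- Extended occupancy vector of an RFM chain with `N + 1` sites: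
the input value `u` at the left boundary, the state in the middle,
and `0` at the right boundary. -/
noncomputable def rfmExt {N : ℕ} (u : ℝ) (x : Fin (N + 1) → ℝ) : Fin (N + 3) → ℝ :=
  Fin.cons u (Fin.snoc x 0)

/-- The flow into site `j` (so `j = 0` is the entry flow `λ₀ u (1 - x₁)`,
`j` internal is `λ_j x_j (1 - x_{j+1})` in 1-based notation,
and `j = N + 1` is the exit flow `λ_n x_n`). -/
noncomputable def rfmFlow {N : ℕ} (lam : Fin (N + 2) → ℝ) (u : ℝ)
    (x : Fin (N + 1) → ℝ) (j : Fin (N + 2)) : ℝ :=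
  lam j * rfmExt u x j.castSucc * (1 - rfmExt u x j.succ)

/-- The vector field of a single RFMIO chain with input `u`. -/
noncomputable def rfmVF {N : ℕ} (lam : Fin (N + 2) → ℝ) (u : ℝ)
    (x : Fin (N + 1) → ℝ) (j : Fin (N + 1)) : ℝ :=
  rfmFlow lam u x j.castSucc - rfmFlow lam u x j.succ

/-- The steady-state equations of an RFM chain with input `u`: all flows are equal,
i.e. `λ₀ u (1-e₁) = λ₁ e₁ (1-e₂) = ⋯ = λ_n e_n`. -/
def rfmSS {N : ℕ} (lam : Fin (N + 2) → ℝ) (u : ℝ) (e : Fin (N + 1) → ℝ) : Prop :=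
  ∀ j : Fin (N + 1), rfmFlow lam u e j.castSucc = rfmFlow lam u e j.succ

/-- The input to RFMIO `i` in the network: `u^i = c^i_0 + ∑_k c^i_k y^k`,
where `y^k = λ^k_{n^k} x^k_{n^k}` is the output of RFMIO `k`. -/
noncomputable def netInput {m : ℕ} {n : Fin m → ℕ}
    (lam : ∀ i : Fin m, Fin (n i + 2) → ℝ)
    (c0 : Fin m → ℝ) (c : Fin m → Fin m → ℝ)
    (z : ∀ i : Fin m, Fin (n i + 1) → ℝ) (i : Fin m) : ℝ :=
  c0 i + ∑ k : Fin m, c i k * (lam k (Fin.last (n k + 1)) * z k (Fin.last (n k)))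

/-- The vector field of the network of `m` RFMIOs with feedback connections. -/
noncomputable def netVF {m : ℕ} {n : Fin m → ℕ}
    (lam : ∀ i : Fin m, Fin (n i + 2) → ℝ)
    (c0 : Fin m → ℝ) (c : Fin m → Fin m → ℝ)
    (z : ∀ i : Fin m, Fin (n i + 1) → ℝ) : ∀ i : Fin m, Fin (n i + 1) → ℝ :=
  fun i => rfmVF (lam i) (netInput lam c0 c z i) (z i)

/-- The network equilibrium equations. -/
def netSS {m : ℕ} {n : Fin m → ℕ}
    (lam : ∀ i : Fin m, Fin (n i + 2) → ℝ)
    (c0 : Fin m → ℝ) (c : Fin m → Fin m → ℝ)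
    (e : ∀ i : Fin m, Fin (n i + 1) → ℝ) : Prop :=
  ∀ i : Fin m, rfmSS (lam i) (netInput lam c0 c e i) (e i)


/-!
Composing the network field `F = netVF` with the projection onto the cube gives a globally
Lipschitz, bounded vector field that is cooperative (each component is nondecreasing in the
other coordinates), with `F 0 ≥ 0` and `F 1 ≤ 0`. By Kamke's comparison principle the cube is
invariant, the trajectories issued from `0` and `1` are monotone, and they enclose every
trajectory starting in the cube; being monotone and bounded, they converge to equilibria
`d ≤ e`. At an equilibrium all flows of a chain equal its output; at the chain where the ratio
of the outputs of `e` and `d` is largest, the entry-flow equation forces that ratio to be `1`,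
whence `d = e`. Finally a trajectory of `ż = F z` starting in the cube coincides with the
clamped one, because `F` is smooth and solutions are unique.
-/

open Set Filter Topology
open scoped NNReal

section ODE

variable {E : Type*} [NormedAddCommGroup E] [NormedSpace ℝ E]

theorem LipschitzWith.exists_eq_forall_mem_Ioo_hasDerivAt [CompleteSpace E] {G : E → E}
    {K : ℝ≥0} {C : ℝ} (hG : LipschitzWith K G) (hC : ∀ x, ‖G x‖ ≤ C) (x₀ : E) {T : ℝ}
    (hT : 0 < T) :
    ∃ f : ℝ → E, f 0 = x₀ ∧ ∀ t ∈ Ioo (-T) T, HasDerivAt f (G (f t)) t := by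
  have hpl : IsPicardLindelof (fun _ ↦ G) (tmin := -T) (tmax := T)
      ⟨0, by linarith, hT.le⟩ x₀ (C.toNNReal * T.toNNReal) 0 C.toNNReal K :=
    IsPicardLindelof.of_time_independent (fun x _ ↦ (hC x).trans (Real.le_coe_toNNReal C))
      hG.lipschitzOnWith (by simp [hT.le])
  obtain ⟨f, hf0, hf⟩ := hpl.exists_eq_forall_mem_Icc_hasDerivWithinAt₀
  exact ⟨f, hf0, fun t ht ↦ (hf t (Ioo_subset_Icc_self ht)).hasDerivAt (Icc_mem_nhds ht.1 ht.2)⟩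

theorem LipschitzWith.exists_eq_forall_hasDerivAt [CompleteSpace E] {G : E → E} {K : ℝ≥0}
    {C : ℝ} (hG : LipschitzWith K G) (hC : ∀ x, ‖G x‖ ≤ C) (x₀ : E) :
    ∃ f : ℝ → E, f 0 = x₀ ∧ ∀ t, HasDerivAt f (G (f t)) t := by
  choose α hα0 hα using fun r : ℝ ↦
    hG.exists_eq_forall_mem_Ioo_hasDerivAt hC x₀ (T := |r| + 1) (by positivity)
  have mem (r t : ℝ) (ht : |t| < |r| + 1) : t ∈ Ioo (-(|r| + 1)) (|r| + 1) := abs_lt.1 ht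
  have hagree (r s t : ℝ) (hr : |t| < |r| + 1) (hs : |t| < |s| + 1) : α r t = α s t := by
    set T := min (|r| + 1) (|s| + 1)
    have hT : 0 < T := by positivity
    refine ODE_solution_unique_of_mem_Ioo (v := fun _ ↦ G) (s := fun _ ↦ univ)
      (fun _ _ ↦ hG.lipschitzOnWith) (t₀ := 0) ⟨by linarith, hT⟩
      (fun t ht ↦ ⟨hα r t (mem r t ?_), trivial⟩) (fun t ht ↦ ⟨hα s t (mem s t ?_), trivial⟩)
      ((hα0 r).trans (hα0 s).symm) (abs_lt.1 (lt_min hr hs))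
    · exact (abs_lt.2 ht).trans_le (min_le_left _ _)
    · exact (abs_lt.2 ht).trans_le (min_le_right _ _)
  refine ⟨fun t ↦ α t t, hα0 0, fun t ↦ ?_⟩
  have hloc : (fun s ↦ α s s) =ᶠ[𝓝 t] α t := by
    filter_upwards [Ioo_mem_nhds (sub_one_lt t) (lt_add_one t)] with s hs
    have hst : |s - t| < 1 := abs_sub_lt_iff.2 ⟨by linarith [hs.2], by linarith [hs.1]⟩
    exact hagree s t s (lt_add_one _) (by linarith [abs_sub_abs_le_abs_sub s t])
  exact (hα t t (mem t t (lt_add_one _))).congr_of_eventuallyEq hloc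

theorem LocallyLipschitz.eqOn_Ici_of_hasDerivAt {F : E → E} (hF : LocallyLipschitz F)
    {x y : ℝ → E} (hx : ∀ t ≥ 0, HasDerivAt x (F (x t)) t)
    (hy : ∀ t ≥ 0, HasDerivAt y (F (y t)) t) (h0 : x 0 = y 0) : EqOn x y (Ici 0) := by
  intro T hT
  have hxc : ContinuousOn x (Icc 0 T) := fun t ht ↦ (hx t ht.1).continuousAt.continuousWithinAt
  have hyc : ContinuousOn y (Icc 0 T) := fun t ht ↦ (hy t ht.1).continuousAt.continuousWithinAt
  obtain ⟨K, hK⟩ := hF.locallyLipschitzOn.exists_lipschitzOnWith_of_compact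
    ((isCompact_Icc.image_of_continuousOn hxc).union (isCompact_Icc.image_of_continuousOn hyc))
  exact ODE_solution_unique_of_mem_Icc_right (s := fun _ ↦ x '' Icc 0 T ∪ y '' Icc 0 T)
    (fun _ _ ↦ hK) hxc (fun t ht ↦ (hx t ht.1).hasDerivWithinAt)
    (fun t ht ↦ Or.inl (mem_image_of_mem _ (Ico_subset_Icc_self ht))) hyc
    (fun t ht ↦ (hy t ht.1).hasDerivWithinAt)
    (fun t ht ↦ Or.inr (mem_image_of_mem _ (Ico_subset_Icc_self ht))) h0 ⟨hT, le_rfl⟩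

theorem eq_zero_of_tendsto_of_hasDerivAt {f f' : ℝ → E} {L v : E}
    (hf : ∀ᶠ t in atTop, HasDerivAt f (f' t) t) (hfL : Tendsto f atTop (𝓝 L))
    (hf' : Tendsto f' atTop (𝓝 v)) : v = 0 := by
  refine norm_le_zero_iff.1 (le_of_forall_pos_le_add fun ε hε ↦ ?_)
  obtain ⟨N, hN⟩ := eventually_atTop.1 (hf.and (hf'.eventually (Metric.closedBall_mem_nhds v hε)))
  have hstep : ∀ t ≥ N, ‖f (t + 1) - f t - v‖ ≤ ε := by
    intro t ht
    have h := norm_image_sub_le_of_norm_deriv_le_segment' (f := fun s ↦ f s - s • v)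
      (f' := fun s ↦ f' s - v) (C := ε)
      (fun s hs ↦ by
        have hd := (hN s (by linarith [hs.1])).1.sub ((hasDerivAt_id' s).smul_const v)
        rw [one_smul] at hd
        exact hd.hasDerivWithinAt)
      (fun s hs ↦ by simpa [← dist_eq_norm] using (hN s (by linarith [hs.1])).2)
      (t + 1) ⟨by linarith, le_rfl⟩
    rw [add_sub_cancel_left, mul_one] at h
    convert h using 2
    rw [add_smul, one_smul]
    abel
  have hlim : Tendsto (fun t ↦ ‖f (t + 1) - f t - v‖) atTop (𝓝 ‖L - L - v‖) :=
    (((hfL.comp (tendsto_atTop_add_const_right _ 1 tendsto_id)).sub hfL).sub_const v).norm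
  simpa using le_of_tendsto hlim (eventually_atTop.2 ⟨N, hstep⟩)

end ODE

theorem MonotoneOn.exists_tendsto_atTop {α : Type*} [ConditionallyCompleteLattice α]
    [TopologicalSpace α] [SupConvergenceClass α] {f : ℝ → α} {a : ℝ} (hf : MonotoneOn f (Ici a))
    (hb : BddAbove (f '' Ici a)) : ∃ L, Tendsto f atTop (𝓝 L) := by
  have hmono : Monotone fun t ↦ f (max t a) := fun s t hst ↦
    hf (le_max_right s a) (le_max_right t a) (max_le_max hst le_rfl)
  have hbdd : BddAbove (range fun t ↦ f (max t a)) :=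
    hb.mono (range_subset_iff.2 fun t ↦ mem_image_of_mem f (le_max_right t a))
  refine ⟨_, (tendsto_atTop_ciSup hmono hbdd).congr' ?_⟩
  filter_upwards [eventually_ge_atTop a] with t ht
  rw [max_eq_left ht]

theorem AntitoneOn.exists_tendsto_atTop {α : Type*} [ConditionallyCompleteLattice α]
    [TopologicalSpace α] [InfConvergenceClass α] {f : ℝ → α} {a : ℝ} (hf : AntitoneOn f (Ici a))
    (hb : BddBelow (f '' Ici a)) : ∃ L, Tendsto f atTop (𝓝 L) :=
  MonotoneOn.exists_tendsto_atTop (α := αᵒᵈ) hf.dual_right hb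

lemma tendsto_slope_max_zero {g : ℝ → ℝ} {v t : ℝ} (hg : HasDerivWithinAt g v (Ici t) t) :
    Tendsto (fun s ↦ (s - t)⁻¹ * (max (g s) 0 - max (g t) 0)) (𝓝[>] t)
      (𝓝 (if 0 < g t then v else if g t < 0 then 0 else max v 0)) := by
  have hslope : Tendsto (fun s ↦ (s - t)⁻¹ * (g s - g t)) (𝓝[>] t) (𝓝 v) := by
    have h := hasDerivWithinAt_iff_tendsto_slope.1 hg
    rw [Set.Ici_sdiff_left] at h
    exact h.congr fun s ↦ by rw [slope_def_field, div_eq_inv_mul]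
  have hcont : Tendsto g (𝓝[>] t) (𝓝 (g t)) :=
    hg.continuousWithinAt.tendsto.mono_left (nhdsWithin_mono t Ioi_subset_Ici_self)
  rcases lt_trichotomy (g t) 0 with hneg | hzero | hpos
  · rw [if_neg hneg.not_gt, if_pos hneg]
    refine tendsto_const_nhds.congr' ?_
    filter_upwards [hcont (Iio_mem_nhds hneg)] with s hs
    rw [max_eq_right hs.le, max_eq_right hneg.le, sub_self, mul_zero]
  · rw [hzero, if_neg (lt_irrefl 0), if_neg (lt_irrefl 0)]
    refine (hslope.max tendsto_const_nhds).congr' ?_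
    filter_upwards [self_mem_nhdsWithin] with s hs
    rw [hzero, max_self, sub_zero, sub_zero,
      mul_max_of_nonneg _ _ (inv_nonneg.2 (sub_pos.2 hs).le), mul_zero]
  · rw [if_pos hpos]
    refine hslope.congr' ?_
    filter_upwards [hcont (Ioi_mem_nhds hpos)] with s hs
    rw [max_eq_left hs.le, max_eq_left hpos.le]

/-- A Grönwall argument applied to `∑ c, max (g c t) 0`, whose right derivative is at most
`K * card ι` times itself. -/
theorem nonpos_of_hasDerivAt_le_sum_max {ι : Type*} [Fintype ι] {g g' : ι → ℝ → ℝ} {K : ℝ}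
    (hK : 0 ≤ K) (hg : ∀ c, ∀ t ≥ 0, HasDerivAt (g c) (g' c t) t) (h0 : ∀ c, g c 0 ≤ 0)
    (hg' : ∀ t ≥ 0, ∀ c, 0 ≤ g c t → g' c t ≤ K * ∑ c', max (g c' t) 0) {t : ℝ} (ht : 0 ≤ t)
    (c : ι) : g c t ≤ 0 := by
  classical
  set h : ℝ → ℝ := fun s ↦ ∑ c', max (g c' s) 0
  set D : ι → ℝ → ℝ := fun c s ↦
    if 0 < g c s then g' c s else if g c s < 0 then 0 else max (g' c s) 0
  have hD : ∀ s ≥ 0, ∀ c, D c s ≤ K * h s := by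
    intro s hs c
    have hKh : 0 ≤ K * h s := mul_nonneg hK (Finset.sum_nonneg fun _ _ ↦ le_max_right _ _)
    simp only [D]
    split_ifs with h1 h2
    · exact hg' s hs c h1.le
    · exact hKh
    · exact max_le (hg' s hs c (not_lt.1 h2)) hKh
  have hslope : ∀ s ≥ 0,
      Tendsto (fun r ↦ (r - s)⁻¹ * (h r - h s)) (𝓝[>] s) (𝓝 (∑ c, D c s)) := by
    intro s hs
    simp only [h, ← Finset.sum_sub_distrib, Finset.mul_sum]
    exact tendsto_finsetSum _ fun c _ ↦ tendsto_slope_max_zero (hg c s hs).hasDerivWithinAt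
  have hcont : ContinuousOn h (Icc 0 t) := continuousOn_finsetSum _ fun c _ s hs ↦
    ContinuousAt.continuousWithinAt (f := fun r ↦ max (g c r) 0)
      ((hg c s hs.1).continuousAt.max continuousAt_const)
  have hgron := le_gronwallBound_of_liminf_deriv_right_le (f := h) (f' := fun s ↦ ∑ c, D c s)
    (δ := 0) (K := K * Fintype.card ι) (ε := 0) hcont
    (fun s hs r hr ↦ ((hslope s hs.1).eventually (gt_mem_nhds hr)).frequently)
    (by simp [h, h0])
    (fun s hs ↦ by
      calc ∑ c, D c s ≤ ∑ _c : ι, K * h s := Finset.sum_le_sum fun c _ ↦ hD s hs.1 c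
        _ = K * Fintype.card ι * h s + 0 := by
          rw [Finset.sum_const, Finset.card_univ, nsmul_eq_mul]
          ring)
    t ⟨ht, le_rfl⟩
  rw [gronwallBound_ε0_δ0] at hgron
  exact (le_max_left _ _).trans
    ((Finset.single_le_sum (f := fun c' ↦ max (g c' t) 0) (fun _ _ ↦ le_max_right _ _)
      (Finset.mem_univ c)).trans hgron)

section Cooperative

variable {ι : Type*} [Fintype ι] {κ : ι → Type*} [∀ i, Fintype (κ i)]

def Cooperative (G : (∀ i, κ i → ℝ) → ∀ i, κ i → ℝ) : Prop :=
  ∀ ⦃x y : ∀ i, κ i → ℝ⦄, x ≤ y → ∀ i j, x i j = y i j → G x i j ≤ G y i j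

lemma norm_sup_sub_le_sum (x y : ∀ i, κ i → ℝ) :
    ‖x ⊔ y - y‖ ≤ ∑ p : Σ i, κ i, max (x p.1 p.2 - y p.1 p.2) 0 := by
  have hS : 0 ≤ ∑ p : Σ i, κ i, max (x p.1 p.2 - y p.1 p.2) 0 :=
    Finset.sum_nonneg fun _ _ ↦ le_max_right _ _
  refine (pi_norm_le_iff_of_nonneg hS).2 fun i ↦ (pi_norm_le_iff_of_nonneg hS).2 fun j ↦ ?_
  have hij : ‖(x ⊔ y - y) i j‖ = max (x i j - y i j) 0 := by
    rw [Real.norm_eq_abs, abs_of_nonneg (by simp), Pi.sub_apply, Pi.sub_apply, Pi.sup_apply,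
      Pi.sup_apply, ← max_sub_sub_right, sub_self]
  rw [hij]
  exact Finset.single_le_sum (f := fun p : Σ i, κ i ↦ max (x p.1 p.2 - y p.1 p.2) 0)
    (fun _ _ ↦ le_max_right _ _) (Finset.mem_univ ⟨i, j⟩)

variable {G : (∀ i, κ i → ℝ) → ∀ i, κ i → ℝ} {K : ℝ≥0}

theorem Cooperative.le_of_hasDerivAt (hcoop : Cooperative G) (hG : LipschitzWith K G)
    {x y x' y' : ℝ → ∀ i, κ i → ℝ} (hx : ∀ t ≥ 0, HasDerivAt x (x' t) t)
    (hy : ∀ t ≥ 0, HasDerivAt y (y' t) t) (hx' : ∀ t ≥ 0, x' t ≤ G (x t))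
    (hy' : ∀ t ≥ 0, G (y t) ≤ y' t) (h0 : x 0 ≤ y 0) {t : ℝ} (ht : 0 ≤ t) : x t ≤ y t := by
  have coord (f f' : ℝ → ∀ i, κ i → ℝ) (hf : ∀ t ≥ 0, HasDerivAt f (f' t) t) (p : Σ i, κ i)
      (s : ℝ) (hs : 0 ≤ s) : HasDerivAt (fun r ↦ f r p.1 p.2) (f' s p.1 p.2) s :=
    hasDerivAt_pi.1 (hasDerivAt_pi.1 (hf s hs) p.1) p.2
  intro i j
  refine sub_nonpos.1 (nonpos_of_hasDerivAt_le_sum_max (g := fun p s ↦ x s p.1 p.2 - y s p.1 p.2)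
    (g' := fun p s ↦ x' s p.1 p.2 - y' s p.1 p.2) K.2
    (fun p s hs ↦ (coord x x' hx p s hs).sub (coord y y' hy p s hs))
    (fun p ↦ sub_nonpos.2 (h0 p.1 p.2)) (fun s hs p hp ↦ ?_) ht ⟨i, j⟩)
  -- compare `x s` with `x s ⊔ y s`, which agrees with it at the coordinate `p`
  have hsup : x s p.1 p.2 = (x s ⊔ y s) p.1 p.2 := (sup_eq_left.2 (sub_nonneg.1 hp)).symm
  calc x' s p.1 p.2 - y' s p.1 p.2 ≤ G (x s ⊔ y s) p.1 p.2 - G (y s) p.1 p.2 := by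
        linarith [hx' s hs p.1 p.2, hy' s hs p.1 p.2, hcoop le_sup_left p.1 p.2 hsup]
    _ ≤ ‖G (x s ⊔ y s) - G (y s)‖ := by
        have h := (norm_le_pi_norm ((G (x s ⊔ y s) - G (y s)) p.1) p.2).trans
          (norm_le_pi_norm (G (x s ⊔ y s) - G (y s)) p.1)
        rw [Real.norm_eq_abs] at h
        exact (le_abs_self _).trans h
    _ ≤ K * ‖x s ⊔ y s - y s‖ := by
        simpa only [dist_eq_norm] using hG.dist_le_mul (x s ⊔ y s) (y s)
    _ ≤ K * ∑ q : Σ i, κ i, max (x s q.1 q.2 - y s q.1 q.2) 0 :=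
        mul_le_mul_of_nonneg_left (norm_sup_sub_le_sum _ _) K.2

variable (hcoop : Cooperative G) (hG : LipschitzWith K G)
include hcoop hG

theorem Cooperative.mem_Icc_of_hasDerivAt {lo hi : ∀ i, κ i → ℝ} (hlo : 0 ≤ G lo)
    (hhi : G hi ≤ 0) {x : ℝ → ∀ i, κ i → ℝ} (hx : ∀ t ≥ 0, HasDerivAt x (G (x t)) t)
    (h0 : x 0 ∈ Icc lo hi) {t : ℝ} (ht : 0 ≤ t) : x t ∈ Icc lo hi :=
  ⟨hcoop.le_of_hasDerivAt hG (x := fun _ ↦ lo) (fun _ _ ↦ hasDerivAt_const _ _) hx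
      (fun _ _ ↦ hlo) (fun _ _ ↦ le_rfl) h0.1 ht,
    hcoop.le_of_hasDerivAt hG (y := fun _ ↦ hi) hx (fun _ _ ↦ hasDerivAt_const _ _)
      (fun _ _ ↦ le_rfl) (fun _ _ ↦ hhi) h0.2 ht⟩

theorem Cooperative.monotoneOn_of_hasDerivAt {x : ℝ → ∀ i, κ i → ℝ}
    (hx : ∀ t ≥ 0, HasDerivAt x (G (x t)) t) (h : ∀ t ≥ 0, x 0 ≤ x t) :
    MonotoneOn x (Ici 0) := by
  intro s hs t ht hst
  have hshift : ∀ r ≥ 0, HasDerivAt (fun r ↦ x (r + (t - s))) (G (x (r + (t - s)))) r :=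
    fun r hr ↦ (hx (r + (t - s)) (by linarith)).comp_add_const r (t - s)
  have := hcoop.le_of_hasDerivAt hG hx hshift
    (fun _ _ ↦ le_rfl) (fun _ _ ↦ le_rfl) (by simpa using h (t - s) (sub_nonneg.2 hst)) hs
  simpa using this

theorem Cooperative.antitoneOn_of_hasDerivAt {x : ℝ → ∀ i, κ i → ℝ}
    (hx : ∀ t ≥ 0, HasDerivAt x (G (x t)) t) (h : ∀ t ≥ 0, x t ≤ x 0) :
    AntitoneOn x (Ici 0) := by
  intro s hs t ht hst
  have hshift : ∀ r ≥ 0, HasDerivAt (fun r ↦ x (r + (t - s))) (G (x (r + (t - s)))) r :=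
    fun r hr ↦ (hx (r + (t - s)) (by linarith)).comp_add_const r (t - s)
  have := hcoop.le_of_hasDerivAt hG hshift hx
    (fun _ _ ↦ le_rfl) (fun _ _ ↦ le_rfl) (by simpa using h (t - s) (sub_nonneg.2 hst)) hs
  simpa using this

theorem Cooperative.exists_tendsto_of_eq_of_le {C : ℝ} (hC : ∀ x, ‖G x‖ ≤ C)
    {lo hi : ∀ i, κ i → ℝ} (hle : lo ≤ hi) (hlo : 0 ≤ G lo) (hhi : G hi ≤ 0)
    (huniq : ∀ d ∈ Icc lo hi, ∀ e ∈ Icc lo hi, G d = 0 → G e = 0 → d ≤ e → d = e) :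
    ∃ e ∈ Icc lo hi, G e = 0 ∧ ∀ x : ℝ → ∀ i, κ i → ℝ,
      (∀ t ≥ 0, HasDerivAt x (G (x t)) t) → x 0 ∈ Icc lo hi → Tendsto x atTop (𝓝 e) := by
  obtain ⟨a, ha0, ha⟩ := hG.exists_eq_forall_hasDerivAt hC lo
  obtain ⟨b, hb0, hb⟩ := hG.exists_eq_forall_hasDerivAt hC hi
  have ha' : ∀ t ≥ 0, HasDerivAt a (G (a t)) t := fun t _ ↦ ha t
  have hb' : ∀ t ≥ 0, HasDerivAt b (G (b t)) t := fun t _ ↦ hb t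
  have haI : ∀ t ≥ 0, a t ∈ Icc lo hi := fun t ↦
    hcoop.mem_Icc_of_hasDerivAt hG hlo hhi ha' (by rw [ha0]; exact ⟨le_rfl, hle⟩)
  have hbI : ∀ t ≥ 0, b t ∈ Icc lo hi := fun t ↦
    hcoop.mem_Icc_of_hasDerivAt hG hlo hhi hb' (by rw [hb0]; exact ⟨hle, le_rfl⟩)
  have hab : ∀ t ≥ 0, a t ≤ b t := fun t ↦
    hcoop.le_of_hasDerivAt hG ha' hb' (fun _ _ ↦ le_rfl) (fun _ _ ↦ le_rfl) (by rwa [ha0, hb0])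
  obtain ⟨d, hd⟩ := (hcoop.monotoneOn_of_hasDerivAt hG ha' fun t ht ↦ ha0 ▸ (haI t ht).1)
    |>.exists_tendsto_atTop ⟨hi, forall_mem_image.2 fun t ht ↦ (haI t ht).2⟩
  obtain ⟨e, he⟩ := (hcoop.antitoneOn_of_hasDerivAt hG hb' fun t ht ↦ hb0 ▸ (hbI t ht).2)
    |>.exists_tendsto_atTop ⟨lo, forall_mem_image.2 fun t ht ↦ (hbI t ht).1⟩
  have hdI : d ∈ Icc lo hi := isClosed_Icc.mem_of_tendsto hd (eventually_atTop.2 ⟨0, haI⟩)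
  have heI : e ∈ Icc lo hi := isClosed_Icc.mem_of_tendsto he (eventually_atTop.2 ⟨0, hbI⟩)
  have hGd : G d = 0 := eq_zero_of_tendsto_of_hasDerivAt (Eventually.of_forall ha) hd
    ((hG.continuous.tendsto d).comp hd)
  have hGe : G e = 0 := eq_zero_of_tendsto_of_hasDerivAt (Eventually.of_forall hb) he
    ((hG.continuous.tendsto e).comp he)
  obtain rfl : d = e := huniq d hdI e heI hGd hGe
    (le_of_tendsto_of_tendsto hd he (eventually_atTop.2 ⟨0, hab⟩))
  refine ⟨d, hdI, hGd, fun x hx hx0 ↦ ?_⟩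
  have hax : ∀ t ≥ 0, a t ≤ x t := fun t ↦
    hcoop.le_of_hasDerivAt hG ha' hx (fun _ _ ↦ le_rfl) (fun _ _ ↦ le_rfl) (ha0 ▸ hx0.1)
  have hxb : ∀ t ≥ 0, x t ≤ b t := fun t ↦
    hcoop.le_of_hasDerivAt hG hx hb' (fun _ _ ↦ le_rfl) (fun _ _ ↦ le_rfl) (hb0 ▸ hx0.2)
  refine tendsto_pi_nhds.2 fun i ↦ tendsto_pi_nhds.2 fun j ↦
    tendsto_of_tendsto_of_tendsto_of_le_of_le'
      (tendsto_pi_nhds.1 (tendsto_pi_nhds.1 hd i) j) (tendsto_pi_nhds.1 (tendsto_pi_nhds.1 he i) j)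
      (eventually_atTop.2 ⟨0, fun t ht ↦ hax t ht i j⟩)
      (eventually_atTop.2 ⟨0, fun t ht ↦ hxb t ht i j⟩)

end Cooperative

section CubeProj

variable {ι : Type*} {κ : ι → Type*}

def cubeProj (x : ∀ i, κ i → ℝ) : ∀ i, κ i → ℝ := fun i j ↦ max 0 (min 1 (x i j))

lemma cubeProj_mem (x : ∀ i, κ i → ℝ) : cubeProj x ∈ Icc 0 1 :=
  ⟨fun _ _ ↦ le_max_left _ _, fun _ _ ↦ max_le zero_le_one (min_le_left _ _)⟩

lemma cubeProj_of_mem {x : ∀ i, κ i → ℝ} (hx : x ∈ Icc 0 1) : cubeProj x = x :=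
  funext fun i ↦ funext fun j ↦ by
    have h0 : 0 ≤ x i j := hx.1 i j
    have h1 : x i j ≤ 1 := hx.2 i j
    rw [cubeProj, min_eq_right h1, max_eq_right h0]

lemma cubeProj_mono : Monotone (cubeProj : (∀ i, κ i → ℝ) → ∀ i, κ i → ℝ) :=
  fun _ _ hxy i j ↦ max_le_max le_rfl (min_le_min le_rfl (hxy i j))

lemma lipschitzWith_cubeProj [Fintype ι] [∀ i, Fintype (κ i)] :
    LipschitzWith 1 (cubeProj : (∀ i, κ i → ℝ) → ∀ i, κ i → ℝ) := by
  have hφ : LipschitzWith 1 fun r : ℝ ↦ max 0 (min 1 r) :=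
    (LipschitzWith.id.const_min 1).const_max 0
  refine LipschitzWith.of_dist_le_mul fun x y ↦ ?_
  rw [NNReal.coe_one, one_mul]
  refine (dist_pi_le_iff dist_nonneg).2 fun i ↦ (dist_pi_le_iff dist_nonneg).2 fun j ↦ ?_
  show dist (max 0 (min 1 (x i j))) (max 0 (min 1 (y i j))) ≤ dist x y
  simpa using (hφ.dist_le_mul (x i j) (y i j)).trans
    (by simpa using (dist_le_pi_dist (x i) (y i) j).trans (dist_le_pi_dist x y i))

lemma Continuous.exists_bound_comp_cubeProj [Fintype ι] [∀ i, Fintype (κ i)] {E : Type*}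
    [SeminormedAddGroup E] {F : (∀ i, κ i → ℝ) → E} (hF : Continuous F) :
    ∃ C, ∀ x, ‖F (cubeProj x)‖ ≤ C := by
  obtain ⟨C, hC⟩ := isCompact_Icc.exists_bound_of_continuousOn hF.continuousOn
  exact ⟨C, fun x ↦ hC _ (cubeProj_mem x)⟩

lemma ContDiff.exists_lipschitzWith_comp_cubeProj [Fintype ι] [∀ i, Fintype (κ i)] {E : Type*}
    [NormedAddCommGroup E] [NormedSpace ℝ E] {F : (∀ i, κ i → ℝ) → E} (hF : ContDiff ℝ 1 F) :
    ∃ K, LipschitzWith K (F ∘ cubeProj) := by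
  obtain ⟨K, hK⟩ := hF.contDiffOn.exists_lipschitzOnWith one_ne_zero (convex_Icc 0 1) isCompact_Icc
  have h := hK.comp (lipschitzWith_cubeProj.lipschitzOnWith (s := univ)) fun x _ ↦ cubeProj_mem x
  rw [mul_one, lipschitzOnWith_univ] at h
  exact ⟨K, h⟩

end CubeProj

section Chain

variable {N : ℕ}

def rfmOutput (lam : Fin (N + 2) → ℝ) (x : Fin (N + 1) → ℝ) : ℝ :=
  lam (Fin.last (N + 1)) * x (Fin.last N)

lemma rfmExt_cases (k : Fin (N + 3)) :
    (∀ u x, rfmExt (N := N) u x k = u) ∨ (∀ u x, rfmExt (N := N) u x k = 0) ∨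
      ∃ j, ∀ u x, rfmExt (N := N) u x k = x j := by
  induction k using Fin.cases with
  | zero => exact Or.inl fun u x ↦ rfl
  | succ k =>
    induction k using Fin.lastCases with
    | last => exact Or.inr (Or.inl fun u x ↦ by simp [rfmExt])
    | cast j => exact Or.inr (Or.inr ⟨j, fun u x ↦ by simp [rfmExt]⟩)

lemma rfmExt_mono {u v : ℝ} {x y : Fin (N + 1) → ℝ} (huv : u ≤ v) (hxy : x ≤ y) :
    rfmExt u x ≤ rfmExt v y := by
  intro k
  rcases rfmExt_cases k with h | h | ⟨j, h⟩ <;> simp only [h]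
  exacts [huv, le_rfl, hxy j]

lemma rfmExt_nonneg {u : ℝ} {x : Fin (N + 1) → ℝ} (hu : 0 ≤ u) (hx : 0 ≤ x) :
    0 ≤ rfmExt u x := by
  intro k
  rcases rfmExt_cases k with h | h | ⟨j, h⟩ <;> simp only [h, Pi.zero_apply]
  exacts [hu, le_rfl, hx j]

lemma rfmExt_succ_le_one (u : ℝ) {x : Fin (N + 1) → ℝ} (hx : x ≤ 1) (k : Fin (N + 2)) :
    rfmExt u x k.succ ≤ 1 := by
  induction k using Fin.lastCases with
  | last => simp [rfmExt]
  | cast j => simpa [rfmExt] using hx j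

lemma ContDiff.rfmExt {E : Type*} [NormedAddCommGroup E] [NormedSpace ℝ E] {n : WithTop ℕ∞}
    {u : E → ℝ} {x : E → Fin (N + 1) → ℝ} (hu : ContDiff ℝ n u) (hx : ContDiff ℝ n x) :
    ContDiff ℝ n fun p ↦ rfmExt (u p) (x p) := by
  refine contDiff_pi.2 fun k ↦ ?_
  rcases rfmExt_cases k with h | h | ⟨j, h⟩ <;> simp only [h]
  exacts [hu, contDiff_const, contDiff_pi.1 hx j]

variable {lam : Fin (N + 2) → ℝ} {u v : ℝ} {x y d e : Fin (N + 1) → ℝ}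

lemma rfmFlow_castSucc (j : Fin (N + 1)) :
    rfmFlow lam u x j.castSucc = lam j.castSucc * rfmExt u x j.castSucc.castSucc * (1 - x j) := by
  simp [rfmFlow, rfmExt]

lemma rfmFlow_succ (j : Fin (N + 1)) :
    rfmFlow lam u x j.succ = lam j.succ * x j * (1 - rfmExt u x j.succ.succ) := by
  simp [rfmFlow, rfmExt]

lemma rfmFlow_zero : rfmFlow lam u x 0 = lam 0 * u * (1 - x 0) := by
  simp [rfmFlow, rfmExt]

lemma rfmExt_castSucc_succ (j : Fin (N + 1)) : rfmExt u x j.castSucc.succ = x j := by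
  simp [rfmExt]

lemma rfmFlow_castSucc_succ (j : Fin N) :
    rfmFlow lam u x j.castSucc.succ = lam j.castSucc.succ * x j.castSucc * (1 - x j.succ) := by
  rw [rfmFlow_succ, Fin.succ_castSucc j, rfmExt_castSucc_succ]

lemma rfmFlow_last : rfmFlow lam u x (Fin.last (N + 1)) = rfmOutput lam x := by
  rw [← Fin.succ_last, rfmFlow_succ, Fin.succ_last]
  simp [rfmExt, rfmOutput]

lemma rfmVF_le_rfmVF (hlam : 0 ≤ lam) (huv : u ≤ v) (hxy : x ≤ y) {j : Fin (N + 1)}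
    (hj : x j = y j) (hxj : x j ∈ Icc 0 1) : rfmVF lam u x j ≤ rfmVF lam v y j := by
  have hext := rfmExt_mono huv hxy
  rw [rfmVF, rfmVF, rfmFlow_castSucc, rfmFlow_castSucc, rfmFlow_succ, rfmFlow_succ, ← hj]
  have hin := mul_le_mul_of_nonneg_right (mul_le_mul_of_nonneg_left (hext j.castSucc.castSucc)
    (hlam j.castSucc)) (sub_nonneg.2 hxj.2)
  have hout := mul_le_mul_of_nonneg_left (sub_le_sub_left (hext j.succ.succ) 1)
    (mul_nonneg (hlam j.succ) hxj.1)
  linarith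

lemma rfmVF_zero_nonneg (hlam : 0 ≤ lam) (hu : 0 ≤ u) (j : Fin (N + 1)) :
    0 ≤ rfmVF lam u 0 j := by
  rw [rfmVF, rfmFlow_castSucc, rfmFlow_succ]
  simpa using mul_nonneg (hlam _) (rfmExt_nonneg hu le_rfl j.castSucc.castSucc)

lemma rfmVF_one_nonpos (hlam : 0 ≤ lam) (j : Fin (N + 1)) : rfmVF lam u 1 j ≤ 0 := by
  rw [rfmVF, rfmFlow_castSucc, rfmFlow_succ]
  simpa using mul_nonneg (hlam j.succ) (sub_nonneg.2 (rfmExt_succ_le_one u le_rfl j.succ))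

lemma rfmVF_eq_zero_iff : rfmVF lam u x = 0 ↔ rfmSS lam u x := by
  simp only [funext_iff, rfmVF, Pi.zero_apply, sub_eq_zero, rfmSS]

lemma rfmSS.rfmFlow_eq (h : rfmSS lam u e) (k : Fin (N + 2)) :
    rfmFlow lam u e k = rfmOutput lam e := by
  induction k using Fin.reverseInduction with
  | last => exact rfmFlow_last
  | cast j ih => exact (h j).trans ih

lemma rfmSS.entry_eq (h : rfmSS lam u e) : lam 0 * u * (1 - e 0) = rfmOutput lam e :=
  rfmFlow_zero.symm.trans (h.rfmFlow_eq 0)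

/-- If the output were nonpositive, so would be every flow, which forces `1 ≤ e j` site by site
from the entrance; but then the exit flow `λ_n e_n` is positive. -/
lemma rfmSS.output_pos (hlam : ∀ k, 0 < lam k) (hu : 0 < u) (h : rfmSS lam u e) :
    0 < rfmOutput lam e := by
  by_contra! hR
  have hfull : ∀ j, 1 ≤ e j := by
    intro j
    induction j using Fin.induction with
    | zero =>
      have := h.entry_eq
      nlinarith [mul_pos (hlam 0) hu]
    | succ j ih =>
      have := h.rfmFlow_eq j.castSucc.succ
      rw [rfmFlow_castSucc_succ] at this
      nlinarith [mul_pos (hlam j.castSucc.succ) (zero_lt_one.trans_le ih)]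
  have := hfull (Fin.last N)
  have := hlam (Fin.last (N + 1))
  simp only [rfmOutput] at hR
  nlinarith

lemma rfmSS.mem_Ioo (hlam : ∀ k, 0 < lam k) (hu : 0 < u) (h : rfmSS lam u e)
    (he : e ∈ Icc 0 1) (j : Fin (N + 1)) : e j ∈ Ioo 0 1 := by
  have hR := h.output_pos hlam hu
  refine ⟨(he.1 j).lt_of_ne fun h0 ↦ ?_, (he.2 j).lt_of_ne fun h1 ↦ ?_⟩
  · have := h.rfmFlow_eq j.succ
    rw [rfmFlow_succ, ← h0, Pi.zero_apply, mul_zero, zero_mul] at this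
    linarith
  · have := h.rfmFlow_eq j.castSucc
    rw [rfmFlow_castSucc, h1, Pi.one_apply, sub_self, mul_zero] at this
    linarith

/-- Solve the flow equations `λ_j x_j (1 - x_{j+1}) = y` backwards from `x_n = y / λ_n`. -/
lemma rfmSS.eq_of_output_eq (hlam : ∀ k, 0 < lam k) (hd : rfmSS lam u d) (he : rfmSS lam v e)
    (he1 : ∀ j, e j < 1) (hde : rfmOutput lam d = rfmOutput lam e) : d = e := by
  funext j
  induction j using Fin.reverseInduction with
  | last => exact mul_left_cancel₀ (hlam _).ne' hde
  | cast j ih =>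
    have hfd := hd.rfmFlow_eq j.castSucc.succ
    have hfe := he.rfmFlow_eq j.castSucc.succ
    rw [rfmFlow_castSucc_succ] at hfd hfe
    rw [ih, hde, ← hfe] at hfd
    exact mul_left_cancel₀ (hlam _).ne' (mul_right_cancel₀ (sub_pos.2 (he1 _)).ne' hfd)

end Chain

section Network

variable {m : ℕ} {n : Fin m → ℕ} {lam : ∀ i : Fin m, Fin (n i + 2) → ℝ} {c0 : Fin m → ℝ}
  {c : Fin m → Fin m → ℝ}

lemma netInput_eq (z : ∀ i : Fin m, Fin (n i + 1) → ℝ) (i : Fin m) :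
    netInput lam c0 c z i = c0 i + ∑ k, c i k * rfmOutput (lam k) (z k) := rfl

lemma netInput_mono (hlam : 0 ≤ lam) (hc : 0 ≤ c) {x y : ∀ i : Fin m, Fin (n i + 1) → ℝ}
    (hxy : x ≤ y) (i : Fin m) : netInput lam c0 c x i ≤ netInput lam c0 c y i :=
  add_le_add le_rfl (Finset.sum_le_sum fun k _ ↦ mul_le_mul_of_nonneg_left
    (mul_le_mul_of_nonneg_left (hxy k _) (hlam k _)) (hc i k))

lemma netInput_pos (hlam : 0 ≤ lam) (hc0 : ∀ i, 0 < c0 i) (hc : 0 ≤ c)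
    {z : ∀ i : Fin m, Fin (n i + 1) → ℝ} (hz : 0 ≤ z) (i : Fin m) : 0 < netInput lam c0 c z i :=
  (hc0 i).trans_le ((le_of_eq (by simp [netInput])).trans (netInput_mono hlam hc hz i))

lemma contDiff_netVF {k : WithTop ℕ∞} : ContDiff ℝ k (netVF lam c0 c) := by
  refine contDiff_pi.2 fun i ↦ ?_
  have hz : ContDiff ℝ k fun z : ∀ i : Fin m, Fin (n i + 1) → ℝ ↦ z i := contDiff_pi.1 contDiff_id i
  have hu : ContDiff ℝ k fun z ↦ netInput lam c0 c z i :=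
    contDiff_const.add (ContDiff.sum fun l _ ↦ contDiff_const.mul
      (contDiff_const.mul (contDiff_pi.1 (contDiff_pi.1 contDiff_id l) _)))
  have hext := contDiff_pi.1 (hu.rfmExt hz)
  refine contDiff_pi.2 fun j ↦ ?_
  exact ((contDiff_const.mul (hext _)).mul (contDiff_const.sub (hext _))).sub
    ((contDiff_const.mul (hext _)).mul (contDiff_const.sub (hext _)))

lemma netVF_le_netVF (hlam : 0 ≤ lam) (hc : 0 ≤ c) {x y : ∀ i : Fin m, Fin (n i + 1) → ℝ}
    (hxy : x ≤ y) {i : Fin m} {j : Fin (n i + 1)} (hij : x i j = y i j) (hx : x i j ∈ Icc 0 1) :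
    netVF lam c0 c x i j ≤ netVF lam c0 c y i j :=
  rfmVF_le_rfmVF (hlam i) (netInput_mono hlam hc hxy i) (hxy i) hij hx

lemma netVF_eq_zero_iff {z : ∀ i : Fin m, Fin (n i + 1) → ℝ} :
    netVF lam c0 c z = 0 ↔ netSS lam c0 c z :=
  ⟨fun h i ↦ rfmVF_eq_zero_iff.1 (congrFun h i), fun h ↦ funext fun i ↦ rfmVF_eq_zero_iff.2 (h i)⟩

noncomputable def netVFClamped (lam : ∀ i : Fin m, Fin (n i + 2) → ℝ) (c0 : Fin m → ℝ)
    (c : Fin m → Fin m → ℝ) :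
    (∀ i : Fin m, Fin (n i + 1) → ℝ) → ∀ i : Fin m, Fin (n i + 1) → ℝ :=
  netVF lam c0 c ∘ cubeProj

lemma netVFClamped_of_mem {x : ∀ i : Fin m, Fin (n i + 1) → ℝ} (hx : x ∈ Icc 0 1) :
    netVFClamped lam c0 c x = netVF lam c0 c x := by
  rw [netVFClamped, Function.comp_apply, cubeProj_of_mem hx]

lemma exists_lipschitzWith_netVFClamped : ∃ K, LipschitzWith K (netVFClamped lam c0 c) :=
  contDiff_netVF.exists_lipschitzWith_comp_cubeProj

lemma exists_bound_netVFClamped : ∃ C, ∀ x, ‖netVFClamped lam c0 c x‖ ≤ C :=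
  (contDiff_netVF (k := 1)).continuous.exists_bound_comp_cubeProj

lemma cooperative_netVFClamped (hlam : 0 ≤ lam) (hc : 0 ≤ c) :
    Cooperative (netVFClamped lam c0 c) := fun x y hxy i j hij ↦
  netVF_le_netVF hlam hc (cubeProj_mono hxy) (by simp [cubeProj, hij])
    ⟨(cubeProj_mem x).1 i j, (cubeProj_mem x).2 i j⟩

lemma netVFClamped_zero_nonneg (hlam : 0 ≤ lam) (hc0 : 0 ≤ c0) : 0 ≤ netVFClamped lam c0 c 0 := by
  rw [netVFClamped_of_mem ⟨le_rfl, zero_le_one⟩]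
  exact fun i ↦ rfmVF_zero_nonneg (hlam i) (by simpa [netInput] using hc0 i)

lemma netVFClamped_one_nonpos (hlam : 0 ≤ lam) : netVFClamped lam c0 c 1 ≤ 0 := by
  rw [netVFClamped_of_mem ⟨zero_le_one, le_rfl⟩]
  exact fun i ↦ rfmVF_one_nonpos (hlam i)

/-- The clamped trajectory from `z 0` stays in the cube, so it also solves `ż = F z` and
coincides with `z` by uniqueness. -/
theorem mem_Icc_of_hasDerivAt_netVF (hlam : 0 ≤ lam) (hc0 : 0 ≤ c0) (hc : 0 ≤ c)
    {z : ℝ → ∀ i : Fin m, Fin (n i + 1) → ℝ} (hz : ∀ t ≥ 0, HasDerivAt z (netVF lam c0 c (z t)) t)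
    (hz0 : z 0 ∈ Icc 0 1) {t : ℝ} (ht : 0 ≤ t) : z t ∈ Icc 0 1 := by
  obtain ⟨K, hG⟩ := exists_lipschitzWith_netVFClamped (lam := lam) (c0 := c0) (c := c)
  obtain ⟨C, hGC⟩ := exists_bound_netVFClamped (lam := lam) (c0 := c0) (c := c)
  obtain ⟨w, hw0, hw⟩ := hG.exists_eq_forall_hasDerivAt hGC (z 0)
  have hwI : ∀ t ≥ 0, w t ∈ Icc 0 1 := fun t ↦
    (cooperative_netVFClamped hlam hc).mem_Icc_of_hasDerivAt hG
      (netVFClamped_zero_nonneg hlam hc0) (netVFClamped_one_nonpos hlam) (fun t _ ↦ hw t)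
      (hw0 ▸ hz0)
  have hwF : ∀ t ≥ 0, HasDerivAt w (netVF lam c0 c (w t)) t := fun t ht ↦
    netVFClamped_of_mem (hwI t ht) ▸ hw t
  have hzw := contDiff_netVF.locallyLipschitz.eqOn_Ici_of_hasDerivAt hz hwF hw0.symm
  exact (hzw ht).symm ▸ hwI t ht

variable (hlam : ∀ i j, 0 < lam i j) (hc0 : ∀ i, 0 < c0 i) (hc : 0 ≤ c)
include hlam hc0 hc

lemma netSS.mem_Ioo {e : ∀ i : Fin m, Fin (n i + 1) → ℝ} (h : netSS lam c0 c e)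
    (he : e ∈ Icc 0 1) (i : Fin m) (j : Fin (n i + 1)) : e i j ∈ Ioo 0 1 :=
  (h i).mem_Ioo (hlam i) (netInput_pos (fun i j ↦ (hlam i j).le) hc0 hc he.1 i) ⟨he.1 i, he.2 i⟩ j

/-- At the chain `i` where the ratio `θ` of the outputs of `e` and `d` is largest, `θ > 1`
would make the input of `e` smaller than `θ` times that of `d`, contradicting the entry-flow
equation `λ₀ u (1 - x₀) = y`. -/
lemma netSS.output_le_of_le {d e : ∀ i : Fin m, Fin (n i + 1) → ℝ} (hd : netSS lam c0 c d)
    (he : netSS lam c0 c e) (hd1 : d ∈ Icc 0 1) (he1 : e ∈ Icc 0 1) (hde : d ≤ e) (k : Fin m) :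
    rfmOutput (lam k) (e k) ≤ rfmOutput (lam k) (d k) := by
  have hu : ∀ z : ∀ i : Fin m, Fin (n i + 1) → ℝ, z ∈ Icc 0 1 → ∀ i, 0 < netInput lam c0 c z i :=
    fun z hz ↦ netInput_pos (fun i j ↦ (hlam i j).le) hc0 hc hz.1
  set Rd := fun k ↦ rfmOutput (lam k) (d k)
  set Re := fun k ↦ rfmOutput (lam k) (e k)
  have hRd : ∀ k, 0 < Rd k := fun k ↦ (hd k).output_pos (hlam k) (hu d hd1 k)
  have : Nonempty (Fin m) := ⟨k⟩
  obtain ⟨i, hi⟩ := Finite.exists_max fun k ↦ Re k / Rd k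
  set θ := Re i / Rd i
  suffices hθ : θ ≤ 1 from (div_le_one (hRd k)).1 ((hi k).trans hθ)
  by_contra! hθ
  have hinput : netInput lam c0 c e i < θ * netInput lam c0 c d i := by
    rw [netInput_eq, netInput_eq, mul_add, Finset.mul_sum]
    have hsum : ∑ k, c i k * Re k ≤ ∑ k, θ * (c i k * Rd k) :=
      Finset.sum_le_sum fun k _ ↦ (mul_le_mul_of_nonneg_left
        ((div_le_iff₀ (hRd k)).1 (hi k)) (hc i k)).trans_eq (by ring)
    linarith [lt_mul_of_one_lt_left (hc0 i) hθ]
  have he0 : 0 < 1 - e i 0 := sub_pos.2 ((he.mem_Ioo hlam hc0 hc he1 i 0).2)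
  have hRθ : Re i = θ * Rd i := (div_mul_cancel₀ _ (hRd i).ne').symm
  have hθ0 : 0 ≤ lam i 0 * (θ * netInput lam c0 c d i) :=
    mul_nonneg (hlam i 0).le (mul_nonneg (by linarith) (hu d hd1 i).le)
  have : Re i < Re i := calc
    Re i = lam i 0 * netInput lam c0 c e i * (1 - e i 0) := (he i).entry_eq.symm
    _ < lam i 0 * (θ * netInput lam c0 c d i) * (1 - e i 0) :=
        mul_lt_mul_of_pos_right (mul_lt_mul_of_pos_left hinput (hlam i 0)) he0
    _ ≤ lam i 0 * (θ * netInput lam c0 c d i) * (1 - d i 0) :=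
        mul_le_mul_of_nonneg_left (sub_le_sub_left (hde i 0) 1) hθ0
    _ = θ * Rd i := by
        show _ = θ * rfmOutput (lam i) (d i)
        rw [← (hd i).entry_eq]
        ring
    _ = Re i := hRθ.symm
  exact lt_irrefl _ this

lemma netSS.eq_of_le {d e : ∀ i : Fin m, Fin (n i + 1) → ℝ} (hd : netSS lam c0 c d)
    (he : netSS lam c0 c e) (hd1 : d ∈ Icc 0 1) (he1 : e ∈ Icc 0 1) (hde : d ≤ e) : d = e :=
  funext fun i ↦ (hd i).eq_of_output_eq (hlam i) (he i) (fun j ↦ (he.mem_Ioo hlam hc0 hc he1 i j).2)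
    (le_antisymm (mul_le_mul_of_nonneg_left (hde i _) (hlam i _).le)
      (hd.output_le_of_le hlam hc0 hc he hd1 he1 hde i))

end Network

/-- A network of `m` RFMIOs with feedback inputs
`u^i = c^i_0 + ∑_k c^i_k y^k` (with `c^i_0 > 0`, `c^i_k ≥ 0`) admits a point
`e ∈ (0,1)^ℓ` with `F(e) = 0` that is globally asymptotically stable on the cube:
every solution of `ż = F(z)` starting in `[0,1]^ℓ` converges to `e`. -/
theorem network_globally_asymptotically_stable
    (m : ℕ) (n : Fin m → ℕ)
    (lam : ∀ i : Fin m, Fin (n i + 2) → ℝ)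
    (hlam : ∀ (i : Fin m) (j : Fin (n i + 2)), 0 < lam i j)
    (c0 : Fin m → ℝ) (hc0 : ∀ i, 0 < c0 i)
    (c : Fin m → Fin m → ℝ) (hc : ∀ i k, 0 ≤ c i k) :
    ∃ e : ∀ i : Fin m, Fin (n i + 1) → ℝ,
      (∀ i j, e i j ∈ Set.Ioo (0 : ℝ) 1) ∧
      netVF lam c0 c e = 0 ∧
      ∀ z : ℝ → ∀ i : Fin m, Fin (n i + 1) → ℝ,
        (∀ t : ℝ, 0 ≤ t → HasDerivAt z (netVF lam c0 c (z t)) t) →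
        (∀ i j, z 0 i j ∈ Set.Icc (0 : ℝ) 1) →
        Filter.Tendsto z Filter.atTop (nhds e) := by
  have hlam0 : 0 ≤ lam := fun i j ↦ (hlam i j).le
  have hc0' : 0 ≤ c0 := fun i ↦ (hc0 i).le
  obtain ⟨K, hG⟩ := exists_lipschitzWith_netVFClamped (lam := lam) (c0 := c0) (c := c)
  obtain ⟨C, hGC⟩ := exists_bound_netVFClamped (lam := lam) (c0 := c0) (c := c)
  obtain ⟨e, he, hGe, hconv⟩ := (cooperative_netVFClamped hlam0 hc).exists_tendsto_of_eq_of_le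
    hG hGC zero_le_one (netVFClamped_zero_nonneg hlam0 hc0') (netVFClamped_one_nonpos hlam0)
    fun d hd e he hGd hGe hde ↦ netSS.eq_of_le hlam hc0 hc
      (netVF_eq_zero_iff.1 ((netVFClamped_of_mem hd).symm.trans hGd))
      (netVF_eq_zero_iff.1 ((netVFClamped_of_mem he).symm.trans hGe)) hd he hde
  rw [netVFClamped_of_mem he] at hGe
  refine ⟨e, netSS.mem_Ioo hlam hc0 hc (netVF_eq_zero_iff.1 hGe) he, hGe, fun z hz hz0 ↦ ?_⟩
  have hz0' : z 0 ∈ Icc 0 1 := ⟨fun i j ↦ (hz0 i j).1, fun i j ↦ (hz0 i j).2⟩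
  refine hconv z (fun t ht ↦ ?_) hz0'
  rw [netVFClamped_of_mem (mem_Icc_of_hasDerivAt_netVF hlam0 hc0' hc hz hz0' ht)]
  exact hz t ht
end

section
/- Consider a network of m RFMIOs with feedback inputs u^i = c^i_0 + Σ_{k=1}^m c^i_k y^k, where c^i_0 > 0 and c^i_k ≥ 0. Then the network admits at most one equilibrium in the open state space: if e = (e^1,...,e^m) and ẽ = (ẽ^1,...,ẽ^m), with e^i, ẽ^i ∈ (0,1)^{n^i} for every i, both satisfy the network equilibrium equations, then e = ẽ. -/
open scoped BigOperators

lemma flow_zero {N : ℕ} (lam : Fin (N + 2) → ℝ) (u : ℝ) (x : Fin (N + 1) → ℝ) :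
    rfmFlow lam u x 0 = lam 0 * u * (1 - x 0) := by
  rw [rfmFlow, rfmExt, Fin.castSucc_zero, Fin.cons_zero, Fin.cons_succ,
    show (0 : Fin (N+2)) = (0 : Fin (N+1)).castSucc from rfl, Fin.snoc_castSucc]

lemma flow_last {N : ℕ} (lam : Fin (N + 2) → ℝ) (u : ℝ) (x : Fin (N + 1) → ℝ) :
    rfmFlow lam u x (Fin.last (N+1)) = lam (Fin.last (N+1)) * x (Fin.last N) := by
  rw [rfmFlow, rfmExt, show Fin.last (N+1) = (Fin.last N).succ from rfl,
    ← Fin.succ_castSucc, Fin.cons_succ, Fin.snoc_castSucc, Fin.cons_succ, Fin.succ_last,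
    Fin.snoc_last]
  ring_nf

lemma flow_mid {N : ℕ} (lam : Fin (N + 2) → ℝ) (u : ℝ) (x : Fin (N + 1) → ℝ) (j : Fin N) :
    rfmFlow lam u x (j.castSucc.succ) = lam j.castSucc.succ * x j.castSucc * (1 - x j.succ) := by
  rw [rfmFlow, rfmExt, ← Fin.succ_castSucc, Fin.cons_succ, Fin.cons_succ, Fin.snoc_castSucc,
    Fin.succ_castSucc, Fin.snoc_castSucc]

lemma flow_eq_last {N : ℕ} {lam : Fin (N + 2) → ℝ} {u : ℝ} {e : Fin (N + 1) → ℝ}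
    (h : rfmSS lam u e) (k : Fin (N + 2)) :
    rfmFlow lam u e k = rfmFlow lam u e (Fin.last (N+1)) := by
  induction k using Fin.reverseInduction with
  | last => rfl
  | cast j ih => rw [h j]; exact ih

/-- site relation at interior sites -/
lemma site_rel {N : ℕ} {lam : Fin (N + 2) → ℝ} {u : ℝ} {e : Fin (N + 1) → ℝ}
    (h : rfmSS lam u e) (j : Fin N) :
    lam j.castSucc.succ * e j.castSucc * (1 - e j.succ)
      = lam (Fin.last (N+1)) * e (Fin.last N) := by
  rw [← flow_mid, ← flow_last]; exact flow_eq_last h _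

lemma input_rel {N : ℕ} {lam : Fin (N + 2) → ℝ} {u : ℝ} {e : Fin (N + 1) → ℝ}
    (h : rfmSS lam u e) :
    lam 0 * u * (1 - e 0) = lam (Fin.last (N+1)) * e (Fin.last N) := by
  rw [← flow_zero, ← flow_last]; exact flow_eq_last h _

lemma chain_sites_mono {N : ℕ} {lam : Fin (N + 2) → ℝ} (hlam : ∀ j, 0 < lam j)
    {u ut ρ : ℝ} (hρ : 1 ≤ ρ)
    {e et : Fin (N + 1) → ℝ}
    (he : ∀ j, e j ∈ Set.Ioo (0:ℝ) 1) (het : ∀ j, et j ∈ Set.Ioo (0:ℝ) 1)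
    (hss : rfmSS lam u e) (hsst : rfmSS lam ut et)
    (hR : ρ * (lam (Fin.last (N+1)) * et (Fin.last N)) ≤ lam (Fin.last (N+1)) * e (Fin.last N)) :
    ∀ j, ρ * et j ≤ e j := by
  intro j
  induction j using Fin.reverseInduction with
  | last =>
    have h1 : lam (Fin.last (N+1)) * (ρ * et (Fin.last N))
        ≤ lam (Fin.last (N+1)) * e (Fin.last N) := by linarith [hR, (by ring :
          ρ * (lam (Fin.last (N+1)) * et (Fin.last N))
            = lam (Fin.last (N+1)) * (ρ * et (Fin.last N)))]
    exact le_of_mul_le_mul_left h1 (hlam _)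
  | cast j ih =>
    have hA := site_rel hss j
    have hB := site_rel hsst j
    have hL := hlam j.castSucc.succ
    have h1 : 0 < 1 - e j.succ := by linarith [(he j.succ).2]
    have h4 : et j.succ ≤ e j.succ := by nlinarith [(het j.succ).1, ih]
    have hc1 : 0 < et j.castSucc := (het j.castSucc).1
    nlinarith [mul_pos hL h1, mul_nonneg (mul_nonneg (mul_nonneg (le_trans zero_le_one hρ) hL.le) hc1.le) (sub_nonneg.2 h4)]

lemma chain_mono {N : ℕ} {lam : Fin (N + 2) → ℝ} (hlam : ∀ j, 0 < lam j)
    {u ut ρ : ℝ} (hρ : 1 ≤ ρ)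
    {e et : Fin (N + 1) → ℝ}
    (he : ∀ j, e j ∈ Set.Ioo (0:ℝ) 1) (het : ∀ j, et j ∈ Set.Ioo (0:ℝ) 1)
    (hss : rfmSS lam u e) (hsst : rfmSS lam ut et)
    (hR : ρ * (lam (Fin.last (N+1)) * et (Fin.last N)) ≤ lam (Fin.last (N+1)) * e (Fin.last N)) :
    ρ * ut ≤ u := by
  have hsite := chain_sites_mono hlam hρ he het hss hsst hR
  have hA := input_rel hss
  have hB := input_rel hsst
  have hL := hlam 0
  have h1 : 0 < 1 - e 0 := by linarith [(he 0).2]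
  have h1t : 0 < 1 - et 0 := by linarith [(het 0).2]
  have h4 : et 0 ≤ e 0 := by nlinarith [(het 0).1, hsite 0]
  have hRtpos : 0 < lam (Fin.last (N+1)) * et (Fin.last N) :=
    mul_pos (hlam _) (het _).1
  have hut : 0 < ut := by nlinarith [mul_pos hL h1t]
  nlinarith [mul_pos hL h1, mul_nonneg (mul_nonneg (mul_nonneg (le_trans zero_le_one hρ) hL.le) hut.le) (sub_nonneg.2 h4)]

lemma chain_eq {N : ℕ} {lam : Fin (N + 2) → ℝ} (hlam : ∀ j, 0 < lam j)
    {u ut : ℝ}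
    {e et : Fin (N + 1) → ℝ}
    (he : ∀ j, e j ∈ Set.Ioo (0:ℝ) 1) (het : ∀ j, et j ∈ Set.Ioo (0:ℝ) 1)
    (hss : rfmSS lam u e) (hsst : rfmSS lam ut et)
    (hR : lam (Fin.last (N+1)) * e (Fin.last N) = lam (Fin.last (N+1)) * et (Fin.last N)) :
    e = et := by
  funext j
  induction j using Fin.reverseInduction with
  | last => exact mul_left_cancel₀ (hlam _).ne' hR
  | cast j ih =>
    have hA := site_rel hss j
    have hB := site_rel hsst j
    have hL := hlam j.castSucc.succ
    have h1 : 0 < 1 - e j.succ := by linarith [(he j.succ).2]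
    have key : lam j.castSucc.succ * e j.castSucc * (1 - e j.succ)
        = lam j.castSucc.succ * et j.castSucc * (1 - e j.succ) := by
      rw [hA, hR, ← hB, ih]
    have h2 : (lam j.castSucc.succ * (1 - e j.succ)) ≠ 0 := (mul_pos hL h1).ne'
    have := mul_left_cancel₀ h2 (by linarith [key, (by ring : lam j.castSucc.succ * e j.castSucc * (1 - e j.succ) = lam j.castSucc.succ * (1 - e j.succ) * e j.castSucc), (by ring : lam j.castSucc.succ * et j.castSucc * (1 - e j.succ) = lam j.castSucc.succ * (1 - e j.succ) * et j.castSucc)] :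
      lam j.castSucc.succ * (1 - e j.succ) * e j.castSucc
        = lam j.castSucc.succ * (1 - e j.succ) * et j.castSucc)
    exact this
lemma net_le
    (m : ℕ) (n : Fin m → ℕ)
    (lam : ∀ i : Fin m, Fin (n i + 2) → ℝ)
    (hlam : ∀ (i : Fin m) (j : Fin (n i + 2)), 0 < lam i j)
    (c0 : Fin m → ℝ) (hc0 : ∀ i, 0 < c0 i)
    (c : Fin m → Fin m → ℝ) (hc : ∀ i k, 0 ≤ c i k)
    (e et : ∀ i : Fin m, Fin (n i + 1) → ℝ)
    (he : ∀ i j, e i j ∈ Set.Ioo (0 : ℝ) 1)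
    (het : ∀ i j, et i j ∈ Set.Ioo (0 : ℝ) 1)
    (heq : netSS lam c0 c e) (heqt : netSS lam c0 c et) :
    ∀ i, lam i (Fin.last (n i + 1)) * e i (Fin.last (n i))
      ≤ lam i (Fin.last (n i + 1)) * et i (Fin.last (n i)) := by
  set R : Fin m → ℝ := fun i => lam i (Fin.last (n i + 1)) * e i (Fin.last (n i)) with hRdef
  set Rt : Fin m → ℝ := fun i => lam i (Fin.last (n i + 1)) * et i (Fin.last (n i)) with hRtdef
  have hRpos : ∀ i, 0 < R i := fun i => mul_pos (hlam i _) (he i _).1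
  have hRtpos : ∀ i, 0 < Rt i := fun i => mul_pos (hlam i _) (het i _).1
  by_contra hcon
  push_neg at hcon
  obtain ⟨i0, hi0⟩ := hcon
  have hne : (Finset.univ : Finset (Fin m)).Nonempty := ⟨i0, Finset.mem_univ i0⟩
  set ρ : ℝ := Finset.univ.sup' hne (fun k => R k / Rt k) with hρdef
  have hρ1 : 1 < ρ := by
    have h1 : R i0 / Rt i0 ≤ ρ := Finset.le_sup' (fun k => R k / Rt k) (Finset.mem_univ i0)
    have h2 : 1 < R i0 / Rt i0 := (one_lt_div (hRtpos i0)).2 hi0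
    linarith
  have hRle : ∀ k, R k ≤ ρ * Rt k := by
    intro k
    have h1 : R k / Rt k ≤ ρ := Finset.le_sup' (fun k => R k / Rt k) (Finset.mem_univ k)
    rw [div_le_iff₀ (hRtpos k)] at h1
    linarith
  obtain ⟨i, -, hieq⟩ := Finset.exists_mem_eq_sup' hne (fun k => R k / Rt k)
  have hiR : R i = ρ * Rt i := by
    rw [hρdef, hieq, div_mul_eq_mul_div, mul_div_assoc, div_self (hRtpos i).ne', mul_one]
  -- chain monotonicity at i
  have hmono : ρ * netInput lam c0 c et i ≤ netInput lam c0 c e i :=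
    chain_mono (hlam i) hρ1.le (he i) (het i) (heq i) (heqt i) (le_of_eq hiR.symm)
  -- network inequality
  have hsum : ∑ k, c i k * R k ≤ ∑ k, c i k * (ρ * Rt k) :=
    Finset.sum_le_sum fun k _ => mul_le_mul_of_nonneg_left (hRle k) (hc i k)
  have hsum2 : ∑ k, c i k * (ρ * Rt k) = ρ * ∑ k, c i k * Rt k := by
    rw [Finset.mul_sum]
    exact Finset.sum_congr rfl fun k _ => by ring
  have hsnn : 0 ≤ ∑ k, c i k * Rt k :=
    Finset.sum_nonneg fun k _ => mul_nonneg (hc i k) (hRtpos k).le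
  have hu : netInput lam c0 c e i = c0 i + ∑ k, c i k * R k := rfl
  have hut : netInput lam c0 c et i = c0 i + ∑ k, c i k * Rt k := rfl
  have hlt : netInput lam c0 c e i < ρ * netInput lam c0 c et i := by
    rw [hu, hut]
    have : c0 i < ρ * c0 i := by nlinarith [hc0 i]
    nlinarith
  linarith


/-- A network of `m` RFMIOs with feedback inputs
`u^i = c^i_0 + ∑_k c^i_k y^k` (with `c^i_0 > 0`, `c^i_k ≥ 0`) admits at most one
equilibrium in the open state space. -/
theorem network_equilibrium_unique
    (m : ℕ) (n : Fin m → ℕ)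
    (lam : ∀ i : Fin m, Fin (n i + 2) → ℝ)
    (hlam : ∀ (i : Fin m) (j : Fin (n i + 2)), 0 < lam i j)
    (c0 : Fin m → ℝ) (hc0 : ∀ i, 0 < c0 i)
    (c : Fin m → Fin m → ℝ) (hc : ∀ i k, 0 ≤ c i k)
    (e et : ∀ i : Fin m, Fin (n i + 1) → ℝ)
    (he : ∀ i j, e i j ∈ Set.Ioo (0 : ℝ) 1)
    (het : ∀ i j, et i j ∈ Set.Ioo (0 : ℝ) 1)
    (heq : netSS lam c0 c e) (heqt : netSS lam c0 c et) :
    e = et := by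
  have h1 := net_le m n lam hlam c0 hc0 c hc e et he het heq heqt
  have h2 := net_le m n lam hlam c0 hc0 c hc et e het he heqt heq
  funext i
  exact chain_eq (hlam i) (he i) (het i) (heq i) (heqt i) (le_antisymm (h1 i) (h2 i))
end

section
/- Let n ≥ 1, let λ_0,...,λ_n > 0, let c_0 > 0 and c_1 ≥ 0. If e, ẽ ∈ (0,1)^n both satisfy the single-RFMIO feedback equilibrium equations λ_0 (c_0 + c_1 λ_n e_n)(1−e_1) = λ_1 e_1(1−e_2) = ⋯ = λ_{n−1} e_{n−1}(1−e_n) = λ_n e_n (and the same equations with ẽ in place of e), then e = ẽ. -/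
open scoped BigOperators

lemma rfmExt_mk_zero {N : ℕ} (u : ℝ) (x : Fin (N + 1) → ℝ) (h : (0:ℕ) < N + 3) :
    rfmExt u x ⟨0, h⟩ = u := rfl

lemma rfmExt_mk_succ {N k : ℕ} (u : ℝ) (x : Fin (N + 1) → ℝ) (hk : k < N + 1)
    (h : k + 1 < N + 3) : rfmExt u x ⟨k + 1, h⟩ = x ⟨k, hk⟩ := by
  have h1 : (⟨k + 1, h⟩ : Fin (N + 3)) = Fin.succ ⟨k, by omega⟩ := rfl
  rw [h1, rfmExt, Fin.cons_succ]
  have h2 : (⟨k, by omega⟩ : Fin (N + 2)) = Fin.castSucc ⟨k, hk⟩ := rfl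
  rw [h2, Fin.snoc_castSucc]

lemma rfmExt_mk_end {N : ℕ} (u : ℝ) (x : Fin (N + 1) → ℝ) (h : N + 2 < N + 3) :
    rfmExt u x ⟨N + 2, h⟩ = 0 := by
  have h1 : (⟨N + 2, h⟩ : Fin (N + 3)) = Fin.succ ⟨N + 1, by omega⟩ := rfl
  rw [h1, rfmExt, Fin.cons_succ]
  have h2 : (⟨N + 1, by omega⟩ : Fin (N + 2)) = Fin.last (N + 1) := rfl
  rw [h2, Fin.snoc_last]

lemma rfmFlow_mk {N k : ℕ} (lam : Fin (N + 2) → ℝ) (u : ℝ) (x : Fin (N + 1) → ℝ)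
    (hk : k < N + 2) :
    rfmFlow lam u x ⟨k, hk⟩ =
      lam ⟨k, hk⟩ * rfmExt u x ⟨k, by omega⟩ * (1 - rfmExt u x ⟨k + 1, by omega⟩) := rfl

/-- All flows along the chain are equal to the entry flow at a steady state. -/
lemma rfmSS_flow_const {N : ℕ} (lam : Fin (N + 2) → ℝ) (u : ℝ) (e : Fin (N + 1) → ℝ)
    (h : rfmSS lam u e) (k : ℕ) (hk : k < N + 2) :
    rfmFlow lam u e ⟨k, hk⟩ = rfmFlow lam u e ⟨0, by omega⟩ := by
  induction k with
  | zero => rfl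
  | succ k ih =>
    have step : rfmFlow lam u e ⟨k, by omega⟩ = rfmFlow lam u e ⟨k + 1, hk⟩ :=
      h ⟨k, by omega⟩
    rw [← step, ih (by omega)]

/-- Core scalar uniqueness lemma for the ℕ-indexed equilibrium equations. -/
lemma rfm_scalar_unique (N : ℕ) (lam E Et : ℕ → ℝ) (c0 c1 : ℝ)
    (hlam : ∀ k, 0 < lam k) (hc0 : 0 < c0) (hc1 : 0 ≤ c1)
    (hE : ∀ k ≤ N, 0 < E k ∧ E k < 1)
    (hEt : ∀ k ≤ N, 0 < Et k ∧ Et k < 1)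
    (hflow : ∀ k ≤ N, lam (k + 1) * E k * (1 - E (k + 1)) = lam (N + 1) * E N)
    (hflowt : ∀ k ≤ N, lam (k + 1) * Et k * (1 - Et (k + 1)) = lam (N + 1) * Et N)
    (hentry : lam 0 * (c0 + c1 * (lam (N + 1) * E N)) * (1 - E 0) = lam (N + 1) * E N)
    (hentryt : lam 0 * (c0 + c1 * (lam (N + 1) * Et N)) * (1 - Et 0) = lam (N + 1) * Et N) :
    ∀ k ≤ N, E k = Et k := by
  set R := lam (N + 1) * E N with hR
  set Rt := lam (N + 1) * Et N with hRt
  have mono : ∀ (F Ft : ℕ → ℝ),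
      (∀ k ≤ N, 0 < F k ∧ F k < 1) → (∀ k ≤ N, 0 < Ft k ∧ Ft k < 1) →
      (∀ k ≤ N, lam (k + 1) * F k * (1 - F (k + 1)) = lam (N + 1) * F N) →
      (∀ k ≤ N, lam (k + 1) * Ft k * (1 - Ft (k + 1)) = lam (N + 1) * Ft N) →
      lam (N + 1) * Ft N < lam (N + 1) * F N →
      ∀ m ≤ N, Ft (N - m) < F (N - m) := by
    intro F Ft hF hFt hfl hflt hlt m
    induction m with
    | zero =>
      intro _
      simpa using (mul_lt_mul_iff_right₀ (hlam (N + 1))).mp hlt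
    | succ m ih =>
      intro hm
      have ihm := ih (by omega)
      set k := N - (m + 1) with hk
      have hk1 : N - m = k + 1 := by omega
      have hkN : k ≤ N := by omega
      have hk1N : k + 1 ≤ N := by omega
      rw [hk1] at ihm
      have e1 := hfl k hkN
      have e2 := hflt k hkN
      have hFk := hF k hkN
      have hFtk := hFt k hkN
      have hFk1 := hF (k + 1) hk1N
      have hFtk1 := hFt (k + 1) hk1N
      have hl := hlam (k + 1)
      by_contra hcon
      push_neg at hcon
      have s1 : 0 < 1 - Ft (k + 1) := sub_pos.mpr hFtk1.2
      have s2 : 1 - F (k + 1) < 1 - Ft (k + 1) := by linarith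
      have c1' : lam (k + 1) * F k * (1 - F (k + 1)) < lam (k + 1) * F k * (1 - Ft (k + 1)) :=
        mul_lt_mul_of_pos_left s2 (mul_pos hl hFk.1)
      have c2 : lam (k + 1) * F k * (1 - Ft (k + 1)) ≤ lam (k + 1) * Ft k * (1 - Ft (k + 1)) :=
        mul_le_mul_of_nonneg_right (mul_le_mul_of_nonneg_left hcon hl.le) s1.le
      rw [e1] at c1'
      rw [e2] at c2
      linarith
  have entry : ∀ S St x xt : ℝ,
      lam 0 * (c0 + c1 * S) * (1 - x) = S →
      lam 0 * (c0 + c1 * St) * (1 - xt) = St →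
      0 < S → 0 < St → St < S → xt < x → False := by
    intro S St x xt hS hSt hSp hStp hlt hxlt
    have hl0 := hlam 0
    have p1 : 0 < c0 + c1 * S := by nlinarith [mul_nonneg hc1 hSp.le]
    have p2 : 0 < c0 + c1 * St := by nlinarith [mul_nonneg hc1 hStp.le]
    have m1 : lam 0 * (c0 + c1 * S) * (1 - x) * (c0 + c1 * St) = S * (c0 + c1 * St) := by
      rw [hS]
    have m2 : lam 0 * (c0 + c1 * St) * (1 - xt) * (c0 + c1 * S) = St * (c0 + c1 * S) := by
      rw [hSt]
    nlinarith [m1, m2, mul_pos (mul_pos (mul_pos hl0 p1) p2) (sub_pos.mpr hxlt)]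
  have hRpos : 0 < R := mul_pos (hlam (N + 1)) (hE N le_rfl).1
  have hRtpos : 0 < Rt := mul_pos (hlam (N + 1)) (hEt N le_rfl).1
  have hRR : R = Rt := by
    rcases lt_trichotomy R Rt with h | h | h
    · exfalso
      have h0 := mono Et E hEt hE hflowt hflow h N le_rfl
      simp only [Nat.sub_self] at h0
      exact entry Rt R (Et 0) (E 0) hentryt hentry hRtpos hRpos h h0
    · exact h
    · exfalso
      have h0 := mono E Et hE hEt hflow hflowt h N le_rfl
      simp only [Nat.sub_self] at h0
      exact entry R Rt (E 0) (Et 0) hentry hentryt hRpos hRtpos h h0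
  have eqm : ∀ m ≤ N, E (N - m) = Et (N - m) := by
    intro m
    induction m with
    | zero =>
      intro _
      simp only [Nat.sub_zero]
      have h' : lam (N + 1) * E N = lam (N + 1) * Et N := by rw [← hR, ← hRt, hRR]
      exact mul_left_cancel₀ (ne_of_gt (hlam (N + 1))) h'
    | succ m ih =>
      intro hm
      have ihm := ih (by omega)
      set k := N - (m + 1) with hk
      have hk1 : N - m = k + 1 := by omega
      have hkN : k ≤ N := by omega
      have hk1N : k + 1 ≤ N := by omega
      rw [hk1] at ihm
      have e1 := hflow k hkN
      have e2 := hflowt k hkN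
      rw [← hRR, ← e1, ihm] at e2
      have hne : lam (k + 1) * (1 - Et (k + 1)) ≠ 0 :=
        ne_of_gt (mul_pos (hlam (k + 1)) (sub_pos.mpr (hEt (k + 1) hk1N).2))
      have h' : lam (k + 1) * (1 - Et (k + 1)) * E k
          = lam (k + 1) * (1 - Et (k + 1)) * Et k := by
        ring_nf; ring_nf at e2; linarith
      exact mul_left_cancel₀ hne h'
  intro k hk
  have := eqm (N - k) (by omega)
  rwa [Nat.sub_sub_self hk] at this

/-- A single RFMIO with output feedback `u = c₀ + c₁ λ_n x_n`
(`c₀ > 0`, `c₁ ≥ 0`) admits at most one equilibrium in `(0,1)^n`. -/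
theorem single_rfmio_feedback_equilibrium_unique
    (N : ℕ) (lam : Fin (N + 2) → ℝ) (hlam : ∀ j, 0 < lam j)
    (c0 c1 : ℝ) (hc0 : 0 < c0) (hc1 : 0 ≤ c1)
    (e et : Fin (N + 1) → ℝ)
    (he : ∀ j, e j ∈ Set.Ioo (0 : ℝ) 1)
    (het : ∀ j, et j ∈ Set.Ioo (0 : ℝ) 1)
    (heq : rfmSS lam (c0 + c1 * (lam (Fin.last (N + 1)) * e (Fin.last N))) e)
    (heqt : rfmSS lam (c0 + c1 * (lam (Fin.last (N + 1)) * et (Fin.last N))) et) :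
    e = et := by
  set u := c0 + c1 * (lam (Fin.last (N + 1)) * e (Fin.last N)) with hu
  set ut := c0 + c1 * (lam (Fin.last (N + 1)) * et (Fin.last N)) with hut
  set Λ : ℕ → ℝ := fun k => if h : k < N + 2 then lam ⟨k, h⟩ else 1 with hΛdef
  set E : ℕ → ℝ := fun k => if h : k < N + 1 then e ⟨k, h⟩ else 0 with hEdef
  set Et : ℕ → ℝ := fun k => if h : k < N + 1 then et ⟨k, h⟩ else 0 with hEtdef
  have hΛ : ∀ k (h : k < N + 2), Λ k = lam ⟨k, h⟩ := fun k h => dif_pos h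
  have hEv : ∀ k (h : k < N + 1), E k = e ⟨k, h⟩ := fun k h => dif_pos h
  have hEtv : ∀ k (h : k < N + 1), Et k = et ⟨k, h⟩ := fun k h => dif_pos h
  have hEend : E (N + 1) = 0 := dif_neg (by omega)
  have hEtend : Et (N + 1) = 0 := dif_neg (by omega)
  have hΛpos : ∀ k, 0 < Λ k := by
    intro k
    by_cases h : k < N + 2
    · rw [hΛ k h]; exact hlam _
    · rw [hΛdef]; simp [h]
  have hEIoo : ∀ k ≤ N, 0 < E k ∧ E k < 1 := by
    intro k hk
    rw [hEv k (by omega)]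
    exact ⟨(he _).1, (he _).2⟩
  have hEtIoo : ∀ k ≤ N, 0 < Et k ∧ Et k < 1 := by
    intro k hk
    rw [hEtv k (by omega)]
    exact ⟨(het _).1, (het _).2⟩
  have hlastlam : lam (Fin.last (N + 1)) = lam ⟨N + 1, by omega⟩ := rfl
  have hlaste : e (Fin.last N) = e ⟨N, by omega⟩ := rfl
  have hlastet : et (Fin.last N) = et ⟨N, by omega⟩ := rfl
  have hRE : lam (Fin.last (N + 1)) * e (Fin.last N) = Λ (N + 1) * E N := by
    rw [hΛ (N + 1) (by omega), hEv N (by omega)]; rfl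
  have hREt : lam (Fin.last (N + 1)) * et (Fin.last N) = Λ (N + 1) * Et N := by
    rw [hΛ (N + 1) (by omega), hEtv N (by omega)]; rfl
  have hconste := rfmSS_flow_const lam u e heq
  have hconstet := rfmSS_flow_const lam ut et heqt
  have hflowE : ∀ k ≤ N, Λ (k + 1) * E k * (1 - E (k + 1)) = Λ (N + 1) * E N := by
    intro k hk
    rw [hΛ (k + 1) (by omega), hΛ (N + 1) (by omega), hEv k (by omega)]
    rcases eq_or_lt_of_le hk with rfl | hklt
    · rw [hEend, hEv _ (Nat.lt_succ_self _)]; ring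
    · rw [hEv (k + 1) (by omega), hEv N (by omega)]
      have h1 := (hconste (k + 1) (by omega)).trans (hconste (N + 1) (by omega)).symm
      rw [rfmFlow_mk, rfmFlow_mk,
        rfmExt_mk_succ u e (show k < N + 1 by omega),
        rfmExt_mk_succ u e (show k + 1 < N + 1 by omega),
        rfmExt_mk_succ u e (show N < N + 1 by omega),
        rfmExt_mk_end] at h1
      linarith [h1]
  have hflowEt : ∀ k ≤ N, Λ (k + 1) * Et k * (1 - Et (k + 1)) = Λ (N + 1) * Et N := by
    intro k hk
    rw [hΛ (k + 1) (by omega), hΛ (N + 1) (by omega), hEtv k (by omega)]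
    rcases eq_or_lt_of_le hk with rfl | hklt
    · rw [hEtend, hEtv _ (Nat.lt_succ_self _)]; ring
    · rw [hEtv (k + 1) (by omega), hEtv N (by omega)]
      have h1 := (hconstet (k + 1) (by omega)).trans (hconstet (N + 1) (by omega)).symm
      rw [rfmFlow_mk, rfmFlow_mk,
        rfmExt_mk_succ ut et (show k < N + 1 by omega),
        rfmExt_mk_succ ut et (show k + 1 < N + 1 by omega),
        rfmExt_mk_succ ut et (show N < N + 1 by omega),
        rfmExt_mk_end] at h1
      linarith [h1]
  have hentry : Λ 0 * (c0 + c1 * (Λ (N + 1) * E N)) * (1 - E 0) = Λ (N + 1) * E N := by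
    rw [← hRE, ← hu, hΛ 0 (by omega), hEv 0 (by omega), hlastlam, hlaste]
    have h1 := (hconste (N + 1) (by omega)).symm
    rw [rfmFlow_mk, rfmFlow_mk, rfmExt_mk_zero,
      rfmExt_mk_succ u e (show 0 < N + 1 by omega),
      rfmExt_mk_succ u e (show N < N + 1 by omega),
      rfmExt_mk_end] at h1
    linarith [h1]
  have hentryt : Λ 0 * (c0 + c1 * (Λ (N + 1) * Et N)) * (1 - Et 0) = Λ (N + 1) * Et N := by
    rw [← hREt, ← hut, hΛ 0 (by omega), hEtv 0 (by omega), hlastlam, hlastet]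
    have h1 := (hconstet (N + 1) (by omega)).symm
    rw [rfmFlow_mk, rfmFlow_mk, rfmExt_mk_zero,
      rfmExt_mk_succ ut et (show 0 < N + 1 by omega),
      rfmExt_mk_succ ut et (show N < N + 1 by omega),
      rfmExt_mk_end] at h1
    linarith [h1]
  have key := rfm_scalar_unique N Λ E Et c0 c1 hΛpos hc0 hc1 hEIoo hEtIoo
    hflowE hflowEt hentry hentryt
  funext i
  have h := key i.1 (by omega)
  rw [hEv i.1 i.isLt, hEtv i.1 i.isLt] at h
  simpa using h
end

section
/- Let n ≥ 1 and λ_1,...,λ_n > 0. Suppose e, ẽ ∈ (0,1)^n satisfy the chain equilibrium relations λ_i e_i(1−e_{i+1}) = λ_n e_n for i = 1,...,n−1, and λ_i ẽ_i(1−ẽ_{i+1}) = λ_n ẽ_n for i = 1,...,n−1. If ẽ_n < e_n, then ẽ_i < e_i for every i = 1,...,n. -/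
/-- For a chain of `n = N + 1 ≥ 1` sites with positive rates
`λ₁, …, λ_n` (here `lam j` is `λ_{j+1}` in 1-based notation), if `e, ẽ ∈ (0,1)^n`
both satisfy the chain equilibrium relations `λ_i e_i (1 - e_{i+1}) = λ_n e_n`
for `i = 1, …, n-1`, and `ẽ_n < e_n`, then `ẽ_i < e_i` for every `i`. -/
theorem chain_equilibrium_monotone
    (N : ℕ) (lam : Fin (N + 1) → ℝ) (hlam : ∀ j, 0 < lam j)
    (e et : Fin (N + 1) → ℝ)
    (he : ∀ j, e j ∈ Set.Ioo (0 : ℝ) 1)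
    (het : ∀ j, et j ∈ Set.Ioo (0 : ℝ) 1)
    (heq : ∀ i : Fin N,
      lam i.castSucc * e i.castSucc * (1 - e i.succ) = lam (Fin.last N) * e (Fin.last N))
    (heqt : ∀ i : Fin N,
      lam i.castSucc * et i.castSucc * (1 - et i.succ) = lam (Fin.last N) * et (Fin.last N))
    (hlast : et (Fin.last N) < e (Fin.last N)) :
    ∀ i, et i < e i := by
  intro i
  induction i using Fin.reverseInduction with
  | last => exact hlast
  | cast i ih =>
    have h1 := heq i
    have h2 := heqt i
    have hA := hlam i.castSucc
    have hL := hlam (Fin.last N)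
    obtain ⟨ha1, ha2⟩ := he i.castSucc
    obtain ⟨hb1, hb2⟩ := he i.succ
    obtain ⟨hc1, hc2⟩ := het i.castSucc
    obtain ⟨hd1, hd2⟩ := het i.succ
    by_contra hcon
    push_neg at hcon
    have k1 : 0 < lam i.castSucc * e i.castSucc * (e i.succ - et i.succ) := by
      apply mul_pos (mul_pos hA ha1); linarith
    have k2 : 0 ≤ lam i.castSucc * (et i.castSucc - e i.castSucc) * (1 - et i.succ) := by
      apply mul_nonneg (mul_nonneg hA.le (by linarith)); linarith
    nlinarith [mul_lt_mul_of_pos_left hlast hL]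
end

section
/- Let n ≥ 1 and λ_0,...,λ_n > 0, let A(λ) be the associated (n+2)×(n+2) Jacobi matrix, and let σ denote the largest eigenvalue of the symmetric matrix A(λ). If e ∈ (0,1)^n satisfies the RFM steady-state equations, then σ > 0 and the steady-state production rate satisfies λ_n e_n = σ^{−2}. -/
open scoped BigOperators

/-- The off-diagonal entry `λ_j^{-1/2}` of the Jacobi matrix (0-based rate index),
defined for all natural `j` for convenience. -/
noncomputable def jacobiEntry {N : ℕ} (lam : Fin (N + 2) → ℝ) (j : ℕ) : ℝ :=
  if h : j < N + 2 then (Real.sqrt (lam ⟨j, h⟩))⁻¹ else 0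

/-- The `(n+2) × (n+2)` symmetric tridiagonal Jacobi matrix associated with an RFM
with `n = N + 1` sites and rates `λ₀, …, λ_n`: zero diagonal and off-diagonal entries
`A_{i,i+1} = A_{i+1,i} = λ_{i-1}^{-1/2}` (1-based indexing). -/
noncomputable def jacobiMat {N : ℕ} (lam : Fin (N + 2) → ℝ) :
    Matrix (Fin (N + 3)) (Fin (N + 3)) ℝ :=
  fun p q =>
    if (p : ℕ) + 1 = (q : ℕ) then jacobiEntry lam p
    else if (q : ℕ) + 1 = (p : ℕ) then jacobiEntry lam q
    else 0

/-- Auxiliary: sum over `Fin m` of an indicator on the value of the coercion. -/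
lemma rfm_sum_ite_coe {m : ℕ} (g : Fin m → ℝ) (k : ℕ) :
    ∑ q : Fin m, (if (q : ℕ) = k then g q else 0) =
      if h : k < m then g ⟨k, h⟩ else 0 := by
  split_ifs with h
  · calc ∑ q : Fin m, (if (q : ℕ) = k then g q else 0)
        = ∑ q : Fin m, (if q = ⟨k, h⟩ then g q else 0) := by
          refine Finset.sum_congr rfl fun q _ => ?_
          exact if_congr (by simp [Fin.ext_iff]) rfl rfl
      _ = g ⟨k, h⟩ := by rw [Finset.sum_ite_eq' Finset.univ _ g]; simp
  · refine Finset.sum_eq_zero fun q _ => if_neg fun hq => h ?_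
    rw [← hq]; exact q.isLt

/-- Let `σ` be the largest eigenvalue of the symmetric Jacobi matrix
`A(λ)` (i.e. `σ` is an eigenvalue and every eigenvalue is `≤ σ`). If `e ∈ (0,1)^n`
satisfies the RFM steady-state equations, then `σ > 0` and `λ_n e_n = σ^{-2}`. -/
theorem production_rate_eq_inverse_square_of_largest_eigenvalue
    (N : ℕ) (lam : Fin (N + 2) → ℝ) (hlam : ∀ j, 0 < lam j)
    (σ : ℝ)
    (hσeig : Module.End.HasEigenvalue (Matrix.toLin' (jacobiMat lam)) σ)
    (hσmax : ∀ μ : ℝ, Module.End.HasEigenvalue (Matrix.toLin' (jacobiMat lam)) μ → μ ≤ σ)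
    (e : Fin (N + 1) → ℝ) (he : ∀ j, e j ∈ Set.Ioo (0 : ℝ) 1)
    (heq : rfmSS lam 1 e) :
    0 < σ ∧ lam (Fin.last (N + 1)) * e (Fin.last N) = (σ ^ 2)⁻¹ := by
  -- the common steady-state flow
  set r : ℝ := lam (Fin.last (N + 1)) * e (Fin.last N) with hrdef
  -- extended occupancy in ℕ-indexed form
  set Eh : ℕ → ℝ := fun k => if h : k < N + 3 then rfmExt 1 e ⟨k, h⟩ else 0 with hEh
  have hEh0 : Eh 0 = 1 := by
    simp only [hEh, dif_pos (by omega : 0 < N + 3)]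
    simp [rfmExt]
  have hEhsucc : ∀ i : ℕ, (h : i < N + 1) → Eh (i + 1) = e ⟨i, h⟩ := by
    intro i h
    have hlt : i + 1 < N + 3 := by omega
    simp only [hEh, dif_pos hlt, rfmExt]
    have h1 : (⟨i + 1, hlt⟩ : Fin (N + 3)) = Fin.succ ⟨i, (by omega : i < N + 2)⟩ := rfl
    rw [h1, Fin.cons_succ]
    have h2 : (⟨i, (by omega : i < N + 2)⟩ : Fin (N + 2)) = Fin.castSucc ⟨i, h⟩ := rfl
    rw [h2, Fin.snoc_castSucc]
  have hEhtop : Eh (N + 2) = 0 := by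
    have hlt : N + 2 < N + 3 := by omega
    simp only [hEh, dif_pos hlt, rfmExt]
    have h1 : (⟨N + 2, hlt⟩ : Fin (N + 3)) = Fin.succ (Fin.last (N + 1)) := rfl
    rw [h1, Fin.cons_succ, Fin.snoc_last]
  have hEhpos : ∀ s : ℕ, s ≤ N + 1 → 0 < Eh s := by
    rintro (_ | i) hs
    · rw [hEh0]; norm_num
    · rw [hEhsucc i (by omega)]; exact (he _).1
  -- flows in ℕ-indexed form
  have hflowE : ∀ j : Fin (N + 2),
      rfmFlow lam 1 e j = lam j * Eh (j : ℕ) * (1 - Eh ((j : ℕ) + 1)) := by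
    intro j
    have h1 : Eh (j : ℕ) = rfmExt 1 e j.castSucc := by
      simp only [hEh, dif_pos (by omega : (j : ℕ) < N + 3)]
      congr 1
    have h2 : Eh ((j : ℕ) + 1) = rfmExt 1 e j.succ := by
      simp only [hEh, dif_pos (by omega : (j : ℕ) + 1 < N + 3)]
      congr 1
    rw [rfmFlow, h1, h2]
  -- all flows equal r
  have hrlast : rfmFlow lam 1 e (Fin.last (N + 1)) = r := by
    rw [hflowE]
    have h1 : ((Fin.last (N + 1) : Fin (N + 2)) : ℕ) = N + 1 := rfl
    rw [h1, hEhsucc N (by omega), hEhtop]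
    have : (⟨N, by omega⟩ : Fin (N + 1)) = Fin.last N := rfl
    rw [this]; ring
  have hflow : ∀ j : Fin (N + 2), rfmFlow lam 1 e j = r := by
    suffices h : ∀ m : ℕ, ∀ j : Fin (N + 2), (j : ℕ) + m = N + 1 →
        rfmFlow lam 1 e j = r by
      intro j
      exact h (N + 1 - (j : ℕ)) j (by omega)
    intro m
    induction m with
    | zero =>
      intro j hj
      have : j = Fin.last (N + 1) := Fin.ext (by rw [Fin.val_last]; omega)
      rw [this]; exact hrlast
    | succ m ih =>
      intro j hj
      have hjlt : (j : ℕ) < N + 1 := by omega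
      have h1 : rfmFlow lam 1 e j = rfmFlow lam 1 e (Fin.succ ⟨(j : ℕ), hjlt⟩) := by
        have hthis := heq ⟨(j : ℕ), hjlt⟩
        have hc : Fin.castSucc (⟨(j : ℕ), hjlt⟩ : Fin (N + 1)) = j := Fin.ext rfl
        rw [hc] at hthis
        exact hthis
      rw [h1]
      exact ih _ (by simp only [Fin.val_succ]; omega)
  have hrpos : 0 < r := by
    rw [hrdef]
    exact mul_pos (hlam _) (he _).1
  -- flow identities in ℕ form
  have hflowN : ∀ s : ℕ, (hs : s < N + 2) →
      lam ⟨s, hs⟩ * Eh s * (1 - Eh (s + 1)) = r := by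
    intro s hs
    have := hflow ⟨s, hs⟩
    rwa [hflowE ⟨s, hs⟩] at this
  -- the putative largest eigenvalue
  set σ₀ : ℝ := (Real.sqrt r)⁻¹ with hσ₀
  have hσ₀pos : 0 < σ₀ := by positivity
  have hσ₀sq : σ₀ ^ 2 = r⁻¹ := by
    rw [hσ₀, ← Real.sqrt_inv]
    exact Real.sq_sqrt (by positivity)
  -- Jacobi entries
  set a : ℕ → ℝ := jacobiEntry lam with ha
  have haval : ∀ s : ℕ, (hs : s < N + 2) → a s = (Real.sqrt (lam ⟨s, hs⟩))⁻¹ := by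
    intro s hs; simp only [ha, jacobiEntry, dif_pos hs]
  have hapos : ∀ s : ℕ, (hs : s < N + 2) → 0 < a s := by
    intro s hs; rw [haval s hs]
    have := hlam ⟨s, hs⟩; positivity
  have hasq : ∀ s : ℕ, (hs : s < N + 2) → a s ^ 2 = (lam ⟨s, hs⟩)⁻¹ := by
    intro s hs; rw [haval s hs, ← Real.sqrt_inv]
    exact Real.sq_sqrt (by have := hlam ⟨s, hs⟩; positivity)
  have hatop : a (N + 2) = 0 := by
    simp only [ha, jacobiEntry, dif_neg (by omega : ¬ N + 2 < N + 2)]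
  have hann : ∀ s : ℕ, 0 ≤ a s := by
    intro s
    simp only [ha, jacobiEntry]
    split_ifs <;> positivity
  -- the eigenvector
  set ρ : ℕ → ℝ := fun k => σ₀ * (a k)⁻¹ * Eh k with hρ
  set X : ℕ → ℝ := fun k => ∏ i ∈ Finset.range k, ρ i with hX
  have hX0 : X 0 = 1 := Finset.prod_range_zero ρ
  have hXsucc : ∀ k : ℕ, X (k + 1) = X k * ρ k := fun k => Finset.prod_range_succ ρ k
  have hρpos : ∀ k : ℕ, k ≤ N + 1 → 0 < ρ k := by
    intro k hk
    have h1 := hapos k (by omega)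
    have h2 := hEhpos k hk
    rw [hρ]; positivity
  have hXpos : ∀ k : ℕ, k ≤ N + 2 → 0 < X k := by
    intro k
    induction k with
    | zero => intro; rw [hX0]; norm_num
    | succ k ih =>
      intro hk
      rw [hXsucc]
      exact mul_pos (ih (by omega)) (hρpos k (by omega))
  -- key flow identity
  have hfl : ∀ s : ℕ, (hs : s < N + 2) →
      σ₀ ^ 2 * (Eh s * (1 - Eh (s + 1))) = a s ^ 2 := by
    intro s hs
    rw [hσ₀sq, hasq s hs]
    have h1 := hflowN s hs
    have h2 : lam ⟨s, hs⟩ ≠ 0 := ne_of_gt (hlam _)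
    have h3 : r ≠ 0 := ne_of_gt hrpos
    field_simp
    linear_combination h1
  -- the edge identity
  have hEa : ∀ s : ℕ, s ≤ N + 1 → a (s + 1) * ρ (s + 1) = σ₀ * Eh (s + 1) := by
    intro s hs
    rcases Nat.lt_or_ge (s + 1) (N + 2) with h | h
    · have h1 := hapos (s + 1) h
      have h5 : a (s + 1) * (a (s + 1))⁻¹ = 1 := mul_inv_cancel₀ (ne_of_gt h1)
      show a (s + 1) * (σ₀ * (a (s + 1))⁻¹ * Eh (s + 1)) = σ₀ * Eh (s + 1)
      linear_combination σ₀ * Eh (s + 1) * h5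
    · have h1 : s + 1 = N + 2 := by omega
      rw [h1, hatop, hEhtop]
      ring
  -- the key scalar identity
  have key : ∀ s : ℕ, s ≤ N + 1 → a (s + 1) * (ρ s * ρ (s + 1)) + a s = σ₀ * ρ s := by
    intro s hs
    have h1 : a (s + 1) * (ρ s * ρ (s + 1)) = ρ s * (σ₀ * Eh (s + 1)) := by
      rw [← hEa s hs]; ring
    rw [h1]
    have h2 := hfl s (by omega)
    have h3 := hapos s (by omega)
    have h4 : ρ s = σ₀ * (a s)⁻¹ * Eh s := rfl
    rw [h4]
    have h5 : (a s)⁻¹ * a s = 1 := inv_mul_cancel₀ (ne_of_gt h3)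
    linear_combination (-(a s)⁻¹) * h2 + (-(a s)) * h5
  -- row sums of the Jacobi matrix against X
  have hsum : ∀ p : Fin (N + 3), ∑ q : Fin (N + 3), jacobiMat lam p q * X (q : ℕ)
      = a (p : ℕ) * X ((p : ℕ) + 1)
        + (if 1 ≤ (p : ℕ) then a ((p : ℕ) - 1) * X ((p : ℕ) - 1) else 0) := by
    intro p
    have hpt : ∀ q : Fin (N + 3), jacobiMat lam p q * X (q : ℕ) =
        (if (q : ℕ) = (p : ℕ) + 1 then a (p : ℕ) * X (q : ℕ) else 0)
        + (if (q : ℕ) = (p : ℕ) - 1 ∧ 1 ≤ (p : ℕ) then a ((p : ℕ) - 1) * X (q : ℕ) else 0) := by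
      intro q
      by_cases hq1 : (q : ℕ) = (p : ℕ) + 1
      · simp only [jacobiMat]
        rw [if_pos hq1.symm, if_pos hq1, if_neg (by omega), ← ha]
        ring
      · by_cases hq2 : (q : ℕ) + 1 = (p : ℕ)
        · simp only [jacobiMat]
          rw [if_neg (by omega), if_pos hq2, if_neg hq1, if_pos ⟨by omega, by omega⟩, ← ha]
          have hq3 : (p : ℕ) - 1 = (q : ℕ) := by omega
          rw [hq3]
          ring
        · simp only [jacobiMat]
          rw [if_neg (by omega), if_neg hq2, if_neg hq1, if_neg (by omega)]
          ring
    rw [Finset.sum_congr rfl (fun q _ => hpt q), Finset.sum_add_distrib]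
    congr 1
    · rw [rfm_sum_ite_coe (fun q => a (p : ℕ) * X (q : ℕ)) ((p : ℕ) + 1)]
      split_ifs with h
      · rfl
      · have hp2 : (p : ℕ) = N + 2 := by omega
        rw [hp2, hatop]
        ring
    · by_cases hp : 1 ≤ (p : ℕ)
      · have hpt2 : ∀ q : Fin (N + 3),
            (if (q : ℕ) = (p : ℕ) - 1 ∧ 1 ≤ (p : ℕ) then a ((p : ℕ) - 1) * X (q : ℕ) else 0)
            = (if (q : ℕ) = (p : ℕ) - 1 then a ((p : ℕ) - 1) * X (q : ℕ) else 0) :=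
          fun q => if_congr (and_iff_left hp) rfl rfl
        rw [Finset.sum_congr rfl (fun q _ => hpt2 q),
          rfm_sum_ite_coe (fun q => a ((p : ℕ) - 1) * X (q : ℕ)) ((p : ℕ) - 1),
          dif_pos (by omega : (p : ℕ) - 1 < N + 3), if_pos hp]
      · rw [if_neg hp]
        refine Finset.sum_eq_zero fun q _ => if_neg fun hc => hp hc.2
  -- the eigenvector equation
  have heig : ∀ p : Fin (N + 3),
      ∑ q : Fin (N + 3), jacobiMat lam p q * X (q : ℕ) = σ₀ * X (p : ℕ) := by
    intro p
    rw [hsum p]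
    rcases Nat.eq_zero_or_pos (p : ℕ) with hp | hp
    · rw [hp, if_neg (by omega)]
      rw [hXsucc 0, hX0]
      have h5 : a 0 * (a 0)⁻¹ = 1 := mul_inv_cancel₀ (ne_of_gt (hapos 0 (by omega)))
      have hρ0 : ρ 0 = σ₀ * (a 0)⁻¹ := by simp only [hρ]; rw [hEh0]; ring
      rw [hρ0]
      linear_combination σ₀ * h5
    · set s := (p : ℕ) - 1 with hs
      have hps : (p : ℕ) = s + 1 := by omega
      have hsle : s ≤ N + 1 := by
        have := p.isLt
        omega
      have hp1 : 1 ≤ (p : ℕ) := hp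
      rw [if_pos hp1, hps, hXsucc (s + 1), hXsucc s]
      linear_combination (X s) * key s hsle
  -- σ₀ is an eigenvalue
  have hσ₀eig : Module.End.HasEigenvalue (Matrix.toLin' (jacobiMat lam)) σ₀ := by
    apply Module.End.hasEigenvalue_of_hasEigenvector
      (x := fun p : Fin (N + 3) => X (p : ℕ))
    constructor
    · rw [Module.End.mem_eigenspace_iff]
      have h1 : Matrix.toLin' (jacobiMat lam) (fun p : Fin (N + 3) => X (p : ℕ))
          = fun p : Fin (N + 3) => σ₀ * X (p : ℕ) := by
        rw [Matrix.toLin'_apply]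
        funext p
        simpa [Matrix.mulVec, dotProduct] using heig p
      rw [h1]
      funext p
      simp
    · intro h0
      have h1 := congrFun h0 0
      simp only [Pi.zero_apply, Fin.val_zero] at h1
      rw [hX0] at h1
      norm_num at h1
  have hle1 : σ₀ ≤ σ := hσmax σ₀ hσ₀eig
  -- Perron argument: |σ| ≤ σ₀
  obtain ⟨y, hy⟩ := hσeig.exists_hasEigenvector
  have hAy : ∀ p : Fin (N + 3), ∑ q : Fin (N + 3), jacobiMat lam p q * y q = σ * y p := by
    intro p
    have h2 : Matrix.toLin' (jacobiMat lam) y = σ • y :=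
      Module.End.mem_eigenspace_iff.mp hy.1
    have h3 := congrFun h2 p
    rw [Matrix.toLin'_apply] at h3
    simpa [Matrix.mulVec, dotProduct] using h3
  have hApos : ∀ p q : Fin (N + 3), 0 ≤ jacobiMat lam p q := by
    intro p q
    simp only [jacobiMat]
    split_ifs
    · exact hann _
    · exact hann _
    · exact le_refl 0
  have hAsym : ∀ p q : Fin (N + 3), jacobiMat lam p q = jacobiMat lam q p := by
    intro p q
    simp only [jacobiMat]
    split_ifs <;> first | rfl | (exfalso; omega)
  have habs : ∀ p : Fin (N + 3), |σ| * |y p| ≤ ∑ q : Fin (N + 3), jacobiMat lam p q * |y q| := by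
    intro p
    calc |σ| * |y p| = |σ * y p| := (abs_mul σ (y p)).symm
      _ = |∑ q : Fin (N + 3), jacobiMat lam p q * y q| := by rw [hAy p]
      _ ≤ ∑ q : Fin (N + 3), |jacobiMat lam p q * y q| := Finset.abs_sum_le_sum_abs _ _
      _ = ∑ q : Fin (N + 3), jacobiMat lam p q * |y q| := by
          refine Finset.sum_congr rfl fun q _ => ?_
          rw [abs_mul, abs_of_nonneg (hApos p q)]
  have hXple : ∀ p : Fin (N + 3), 0 < X (p : ℕ) :=
    fun p => hXpos _ (Nat.lt_succ_iff.mp p.isLt)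
  have hSpos : 0 < ∑ p : Fin (N + 3), X (p : ℕ) * |y p| := by
    obtain ⟨p0, hp0⟩ : ∃ p, y p ≠ 0 := by
      by_contra hc
      push_neg at hc
      exact hy.2 (funext fun p => hc p)
    refine Finset.sum_pos' (fun p _ => mul_nonneg (hXple p).le (abs_nonneg _))
      ⟨p0, Finset.mem_univ _, mul_pos (hXple p0) (abs_pos.mpr hp0)⟩
  have hchain : |σ| * (∑ p : Fin (N + 3), X (p : ℕ) * |y p|)
      ≤ σ₀ * (∑ p : Fin (N + 3), X (p : ℕ) * |y p|) := by
    calc |σ| * (∑ p : Fin (N + 3), X (p : ℕ) * |y p|)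
        = ∑ p : Fin (N + 3), X (p : ℕ) * (|σ| * |y p|) := by
          rw [Finset.mul_sum]
          exact Finset.sum_congr rfl fun p _ => by ring
      _ ≤ ∑ p : Fin (N + 3), X (p : ℕ) * (∑ q : Fin (N + 3), jacobiMat lam p q * |y q|) :=
          Finset.sum_le_sum fun p _ => mul_le_mul_of_nonneg_left (habs p) (hXple p).le
      _ = ∑ q : Fin (N + 3), (∑ p : Fin (N + 3), jacobiMat lam q p * X (p : ℕ)) * |y q| := by
          simp_rw [Finset.mul_sum]
          rw [Finset.sum_comm]
          refine Finset.sum_congr rfl fun q _ => ?_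
          rw [Finset.sum_mul]
          refine Finset.sum_congr rfl fun p _ => ?_
          rw [hAsym q p]
          ring
      _ = ∑ q : Fin (N + 3), (σ₀ * X (q : ℕ)) * |y q| := by
          refine Finset.sum_congr rfl fun q _ => ?_
          rw [heig q]
      _ = σ₀ * (∑ p : Fin (N + 3), X (p : ℕ) * |y p|) := by
          rw [Finset.mul_sum]
          exact Finset.sum_congr rfl fun q _ => by ring
  have hle2 : |σ| ≤ σ₀ := le_of_mul_le_mul_right hchain hSpos
  have hσeq : σ = σ₀ := le_antisymm (le_trans (le_abs_self σ) hle2) hle1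
  constructor
  · rw [hσeq]
    exact hσ₀pos
  · rw [hσeq, hσ₀sq, inv_inv]
end

section
/- Let n ≥ 1 and let λ, λ̃ ∈ ℝ^{n+1} be vectors of positive rates with λ̃_i ≥ λ_i for all i = 0,...,n and λ̃_k > λ_k for at least one index k. Then the largest eigenvalue of the symmetric Jacobi matrix A(λ̃) is strictly smaller than the largest eigenvalue of the symmetric Jacobi matrix A(λ). -/
open scoped BigOperators

/-! Let `v` be an eigenvector of `A(λ̃)` for its top eigenvalue `σ̃`. As `A(λ̃)` is entrywise
nonnegative, `|v|` has Rayleigh quotient at least that of `v`, so `|v|` is again a top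
eigenvector. A zero of a nonnegative eigenvector of a nonnegative matrix propagates along
positive entries, and `A(λ̃)` has a positive sub- and superdiagonal, so `|v| > 0` everywhere.
Raising the rates lowers the entries `λ_j^{-1/2}`, strictly at `λ_k`, whence
`σ̃ ‖v‖² = ⟨|v|, A(λ̃)|v|⟩ < ⟨|v|, A(λ)|v|⟩ ≤ σ ‖v‖²`. -/

open Matrix Module.End

section Nonneg

variable {ι : Type*} [Fintype ι]

theorem dotProduct_mulVec_eq_sum (A : Matrix ι ι ℝ) (x y : ι → ℝ) :
    x ⬝ᵥ A *ᵥ y = ∑ i, ∑ j, x i * A i j * y j := by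
  simp only [dotProduct, mulVec, Finset.mul_sum, mul_assoc]

theorem dotProduct_mulVec_le_abs {A : Matrix ι ι ℝ} (hA : ∀ i j, 0 ≤ A i j) (x : ι → ℝ) :
    x ⬝ᵥ A *ᵥ x ≤ |x| ⬝ᵥ A *ᵥ |x| := by
  simp only [dotProduct_mulVec_eq_sum, Pi.abs_apply]
  refine Finset.sum_le_sum fun i _ => Finset.sum_le_sum fun j _ => ?_
  calc x i * A i j * x j = A i j * (x i * x j) := by ring
    _ ≤ A i j * (|x i| * |x j|) := by
      rw [← abs_mul]; exact mul_le_mul_of_nonneg_left (le_abs_self _) (hA i j)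
    _ = |x i| * A i j * |x j| := by ring

theorem dotProduct_mulVec_lt_of_le_of_lt {A B : Matrix ι ι ℝ} (hAB : ∀ i j, A i j ≤ B i j)
    {p q : ι} (hpq : A p q < B p q) {x : ι → ℝ} (hx : ∀ i, 0 < x i) :
    x ⬝ᵥ A *ᵥ x < x ⬝ᵥ B *ᵥ x := by
  have hterm : ∀ j i, x i * A i j * x j ≤ x i * B i j * x j := fun j i =>
    mul_le_mul_of_nonneg_right (mul_le_mul_of_nonneg_left (hAB i j) (hx i).le) (hx j).le
  simp only [dotProduct_mulVec_eq_sum]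
  refine Finset.sum_lt_sum (fun i _ => ?_) ⟨p, Finset.mem_univ p, ?_⟩
  · exact Finset.sum_le_sum fun j _ => hterm j i
  · refine Finset.sum_lt_sum (fun j _ => ?_) ⟨q, Finset.mem_univ q, ?_⟩
    · exact hterm j p
    · exact mul_lt_mul_of_pos_right (mul_lt_mul_of_pos_left hpq (hx p)) (hx q)

theorem eq_zero_of_mulVec_eq_smul {A : Matrix ι ι ℝ} (hA : ∀ i j, 0 ≤ A i j) {x : ι → ℝ}
    (hx : 0 ≤ x) {c : ℝ} (hAx : A *ᵥ x = c • x) {i j : ι} (hij : 0 < A i j) (hi : x i = 0) :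
    x j = 0 := by
  have hsum : ∑ k, A i k * x k = 0 := by
    simpa [mulVec, dotProduct, hi] using congrFun hAx i
  have := (Finset.sum_eq_zero_iff_of_nonneg fun k _ => mul_nonneg (hA i k) (hx k)).mp hsum j
    (Finset.mem_univ j)
  exact (mul_eq_zero.mp this).resolve_left hij.ne'

end Nonneg

theorem pos_of_mulVec_eq_smul_of_tridiagonal {n : ℕ} {A : Matrix (Fin (n + 1)) (Fin (n + 1)) ℝ}
    (hA : ∀ i j, 0 ≤ A i j) (hsuper : ∀ i : Fin n, 0 < A i.castSucc i.succ)
    (hsub : ∀ i : Fin n, 0 < A i.succ i.castSucc) {x : Fin (n + 1) → ℝ} (hx : 0 ≤ x)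
    (hx₀ : x ≠ 0) {c : ℝ} (hAx : A *ᵥ x = c • x) (i : Fin (n + 1)) : 0 < x i := by
  have hzero : ∀ j, x j = 0 ↔ x 0 = 0 := by
    refine Fin.induction Iff.rfl fun j ih => ?_
    rw [← ih]
    exact ⟨eq_zero_of_mulVec_eq_smul hA hx hAx (hsub j),
      eq_zero_of_mulVec_eq_smul hA hx hAx (hsuper j)⟩
  refine (hx i).lt_of_ne fun hi => hx₀ (funext fun j => ?_)
  exact (hzero j).mpr ((hzero i).mp hi.symm)

section Spectral

variable {ι : Type*} [Fintype ι] [DecidableEq ι] {A : Matrix ι ι ℝ} {σ : ℝ}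

theorem posSemidef_smul_one_sub_of_hasEigenvalue_le (hA : A.IsHermitian)
    (hσ : ∀ μ, HasEigenvalue (toLin' A) μ → μ ≤ σ) : (σ • 1 - A).PosSemidef := by
  rw [posSemidef_iff_isHermitian_and_spectrum_nonneg]
  refine ⟨(isHermitian_one.smul (IsSelfAdjoint.all σ)).sub hA, ?_⟩
  rw [← Algebra.algebraMap_eq_smul_one, ← spectrum.singleton_sub_eq]
  rintro _ ⟨_, rfl, μ, hμ, rfl⟩
  have := hσ μ (HasEigenvalue.of_mem_spectrum (by rwa [spectrum_toLin']))
  simp only [Set.mem_ofPred_eq]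
  linarith

theorem dotProduct_mulVec_le_of_hasEigenvalue_le (hA : A.IsHermitian)
    (hσ : ∀ μ, HasEigenvalue (toLin' A) μ → μ ≤ σ) (x : ι → ℝ) :
    x ⬝ᵥ A *ᵥ x ≤ σ * (x ⬝ᵥ x) := by
  have := (posSemidef_smul_one_sub_of_hasEigenvalue_le hA hσ).dotProduct_mulVec_nonneg x
  simp only [star_trivial, sub_mulVec, smul_mulVec, one_mulVec, dotProduct_sub,
    dotProduct_smul, smul_eq_mul] at this
  linarith

theorem mulVec_eq_smul_of_dotProduct_mulVec_eq (hA : A.IsHermitian)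
    (hσ : ∀ μ, HasEigenvalue (toLin' A) μ → μ ≤ σ) {x : ι → ℝ}
    (hx : x ⬝ᵥ A *ᵥ x = σ * (x ⬝ᵥ x)) : A *ᵥ x = σ • x := by
  have := (posSemidef_smul_one_sub_of_hasEigenvalue_le hA hσ).dotProduct_mulVec_zero_iff x
  simp only [star_trivial, sub_mulVec, smul_mulVec, one_mulVec, dotProduct_sub,
    dotProduct_smul, smul_eq_mul, hx, sub_self, true_iff, sub_eq_zero] at this
  exact this.symm

theorem abs_mulVec_eq_smul (hA : A.IsHermitian) (hA₀ : ∀ i j, 0 ≤ A i j)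
    (hσ : ∀ μ, HasEigenvalue (toLin' A) μ → μ ≤ σ) {v : ι → ℝ} (hv : A *ᵥ v = σ • v) :
    A *ᵥ |v| = σ • |v| := by
  refine mulVec_eq_smul_of_dotProduct_mulVec_eq hA hσ (le_antisymm
    (dotProduct_mulVec_le_of_hasEigenvalue_le hA hσ |v|) ?_)
  have habs : |v| ⬝ᵥ |v| = v ⬝ᵥ v := by
    simp only [dotProduct, Pi.abs_apply, abs_mul_abs_self]
  calc σ * (|v| ⬝ᵥ |v|) = v ⬝ᵥ A *ᵥ v := by rw [habs, hv, dotProduct_smul, smul_eq_mul]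
    _ ≤ |v| ⬝ᵥ A *ᵥ |v| := dotProduct_mulVec_le_abs hA₀ v

end Spectral

section Jacobi

variable {N : ℕ}

theorem jacobiEntry_nonneg (lam : Fin (N + 2) → ℝ) (j : ℕ) : 0 ≤ jacobiEntry lam j := by
  unfold jacobiEntry
  split_ifs <;> positivity

theorem jacobiEntry_le_of_le {lam lamt : Fin (N + 2) → ℝ} (hlam : ∀ j, 0 < lam j)
    (hle : ∀ j, lam j ≤ lamt j) (j : ℕ) : jacobiEntry lamt j ≤ jacobiEntry lam j := by
  unfold jacobiEntry
  split_ifs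
  · exact inv_anti₀ (Real.sqrt_pos.mpr (hlam _)) (Real.sqrt_le_sqrt (hle _))
  · rfl

theorem jacobiMat_isHermitian (lam : Fin (N + 2) → ℝ) : (jacobiMat lam).IsHermitian := by
  ext p q
  simp only [conjTranspose_apply, star_trivial, jacobiMat]
  split_ifs <;> first | rfl | omega

theorem jacobiMat_nonneg (lam : Fin (N + 2) → ℝ) (p q : Fin (N + 3)) :
    0 ≤ jacobiMat lam p q := by
  unfold jacobiMat
  split_ifs <;> first | exact jacobiEntry_nonneg lam _ | rfl

theorem jacobiMat_le_of_le {lam lamt : Fin (N + 2) → ℝ} (hlam : ∀ j, 0 < lam j)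
    (hle : ∀ j, lam j ≤ lamt j) (p q : Fin (N + 3)) : jacobiMat lamt p q ≤ jacobiMat lam p q := by
  unfold jacobiMat
  split_ifs <;> first | exact jacobiEntry_le_of_le hlam hle _ | rfl

theorem jacobiMat_castSucc_succ (lam : Fin (N + 2) → ℝ) (i : Fin (N + 2)) :
    jacobiMat lam i.castSucc i.succ = (√(lam i))⁻¹ := by
  simp [jacobiMat, jacobiEntry]

theorem jacobiMat_succ_castSucc (lam : Fin (N + 2) → ℝ) (i : Fin (N + 2)) :
    jacobiMat lam i.succ i.castSucc = (√(lam i))⁻¹ := by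
  simp [jacobiMat, jacobiEntry, show (i : ℕ) + 1 + 1 ≠ i by omega]

theorem pos_of_jacobiMat_mulVec_eq_smul {lam : Fin (N + 2) → ℝ} (hlam : ∀ j, 0 < lam j)
    {x : Fin (N + 3) → ℝ} (hx : 0 ≤ x) (hx₀ : x ≠ 0) {c : ℝ}
    (hAx : jacobiMat lam *ᵥ x = c • x) (i : Fin (N + 3)) : 0 < x i :=
  pos_of_mulVec_eq_smul_of_tridiagonal (jacobiMat_nonneg lam)
    (fun j => jacobiMat_castSucc_succ lam j ▸ by have := hlam j; positivity)
    (fun j => jacobiMat_succ_castSucc lam j ▸ by have := hlam j; positivity) hx hx₀ hAx i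

end Jacobi

theorem perron_root_strictly_decreasing_in_rates_general
    (N : ℕ) (lam lamt : Fin (N + 2) → ℝ)
    (hlam : ∀ j, 0 < lam j) (hlamt : ∀ j, 0 < lamt j)
    (hle : ∀ j, lam j ≤ lamt j) (hlt : ∃ k, lam k < lamt k)
    (σ σt : ℝ)
    (hσmax : ∀ μ : ℝ, Module.End.HasEigenvalue (Matrix.toLin' (jacobiMat lam)) μ → μ ≤ σ)
    (hσteig : Module.End.HasEigenvalue (Matrix.toLin' (jacobiMat lamt)) σt)
    (hσtmax : ∀ μ : ℝ, Module.End.HasEigenvalue (Matrix.toLin' (jacobiMat lamt)) μ → μ ≤ σt) :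
    σt < σ := by
  obtain ⟨v, hv⟩ := hσteig.exists_hasEigenvector
  have hw : jacobiMat lamt *ᵥ |v| = σt • |v| :=
    abs_mulVec_eq_smul (jacobiMat_isHermitian lamt) (jacobiMat_nonneg lamt) hσtmax
      (by simpa using hv.apply_eq_smul)
  have hw_pos := pos_of_jacobiMat_mulVec_eq_smul hlamt (abs_nonneg v)
    (by simpa using hv.2) hw
  obtain ⟨k, hk⟩ := hlt
  have hentry : jacobiMat lamt k.castSucc k.succ < jacobiMat lam k.castSucc k.succ := by
    simp only [jacobiMat_castSucc_succ]
    exact inv_strictAnti₀ (Real.sqrt_pos.mpr (hlam k)) (Real.sqrt_lt_sqrt (hlam k).le hk)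
  have hquad : σt * (|v| ⬝ᵥ |v|) < σ * (|v| ⬝ᵥ |v|) :=
    calc σt * (|v| ⬝ᵥ |v|) = |v| ⬝ᵥ jacobiMat lamt *ᵥ |v| := by
          rw [hw, dotProduct_smul, smul_eq_mul]
      _ < |v| ⬝ᵥ jacobiMat lam *ᵥ |v| :=
          dotProduct_mulVec_lt_of_le_of_lt (jacobiMat_le_of_le hlam hle) hentry hw_pos
      _ ≤ σ * (|v| ⬝ᵥ |v|) :=
          dotProduct_mulVec_le_of_hasEigenvalue_le (jacobiMat_isHermitian lam) hσmax _
  exact lt_of_mul_lt_mul_right hquad (dotProduct_star_self_nonneg |v|)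

/-- If the rates `λ̃` dominate the rates `λ` componentwise with a
strict increase in at least one component, then the largest eigenvalue of `A(λ̃)` is
strictly smaller than the largest eigenvalue of `A(λ)`. -/
theorem perron_root_strictly_decreasing_in_rates
    (N : ℕ) (lam lamt : Fin (N + 2) → ℝ)
    (hlam : ∀ j, 0 < lam j) (hlamt : ∀ j, 0 < lamt j)
    (hle : ∀ j, lam j ≤ lamt j) (hlt : ∃ k, lam k < lamt k)
    (σ σt : ℝ)
    (hσeig : Module.End.HasEigenvalue (Matrix.toLin' (jacobiMat lam)) σ)
    (hσmax : ∀ μ : ℝ, Module.End.HasEigenvalue (Matrix.toLin' (jacobiMat lam)) μ → μ ≤ σ)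
    (hσteig : Module.End.HasEigenvalue (Matrix.toLin' (jacobiMat lamt)) σt)
    (hσtmax : ∀ μ : ℝ, Module.End.HasEigenvalue (Matrix.toLin' (jacobiMat lamt)) μ → μ ≤ σt) :
    σt < σ :=
  perron_root_strictly_decreasing_in_rates_general N lam lamt hlam hlamt hle hlt σ σt hσmax hσteig
    hσtmax
end
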